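/- arXiv:1610.08558 — 6 statements merged into one kernel-verified Lean document; each statement's English description precedes it below -/
import Mathlib

section
/- The risk tolerance function satisfies the autonomous fast-diffusion PDE: R_t(t,ξ) + (λ₀²/2) · R(t,ξ)² · R_ξξ(t,ξ) = 0 for all (t,ξ) ∈ (0,T) × (α,1). -/
open Set

/-! Auxiliary machinery: partial derivatives of smooth functions on `ℝ × ℝ`. -/

/-- Partial derivative in the second (space) variable. -/
noncomputable def DX (f : ℝ × ℝ → ℝ) : ℝ × ℝ → ℝ := fun p => fderiv ℝ f p (0, 1)

/-- Partial derivative in the first (time) variable. -/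
noncomputable def DT (f : ℝ × ℝ → ℝ) : ℝ × ℝ → ℝ := fun p => fderiv ℝ f p (1, 0)

lemma partY {f : ℝ × ℝ → ℝ} (hf : Differentiable ℝ f) (t ξ : ℝ) :
    HasDerivAt (fun y => f (t, y)) (DX f (t, ξ)) ξ := by
  have h1 : HasDerivAt (fun y : ℝ => ((t, y) : ℝ × ℝ)) (0, 1) ξ :=
    (hasDerivAt_const ξ t).prodMk (hasDerivAt_id ξ)
  exact (hf (t, ξ)).hasFDerivAt.comp_hasDerivAt ξ h1

lemma partX {f : ℝ × ℝ → ℝ} (hf : Differentiable ℝ f) (t ξ : ℝ) :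
    HasDerivAt (fun s => f (s, ξ)) (DT f (t, ξ)) t := by
  have h1 : HasDerivAt (fun s : ℝ => ((s, ξ) : ℝ × ℝ)) (1, 0) t :=
    (hasDerivAt_id t).prodMk (hasDerivAt_const t ξ)
  exact (hf (t, ξ)).hasFDerivAt.comp_hasDerivAt t h1

lemma smoothD {f : ℝ × ℝ → ℝ} (hf : ContDiff ℝ (⊤ : ℕ∞) f) (v : ℝ × ℝ) :
    ContDiff ℝ (⊤ : ℕ∞) (fun p => fderiv ℝ f p v) :=
  (ContinuousLinearMap.apply ℝ ℝ v).contDiff.comp (hf.fderiv_right (by simp))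

lemma smoothDX {f : ℝ × ℝ → ℝ} (hf : ContDiff ℝ (⊤ : ℕ∞) f) : ContDiff ℝ (⊤ : ℕ∞) (DX f) :=
  smoothD hf (0, 1)

lemma smoothDT {f : ℝ × ℝ → ℝ} (hf : ContDiff ℝ (⊤ : ℕ∞) f) : ContDiff ℝ (⊤ : ℕ∞) (DT f) :=
  smoothD hf (1, 0)

lemma clairaut {f : ℝ × ℝ → ℝ} (hf : ContDiff ℝ (⊤ : ℕ∞) f) (p v w : ℝ × ℝ) :
    fderiv ℝ (fun q => fderiv ℝ f q v) p w = fderiv ℝ (fun q => fderiv ℝ f q w) p v := by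
  have hd : Differentiable ℝ (fderiv ℝ f) := (hf.fderiv_right (m := 1) (WithTop.coe_le_coe.mpr le_top)).differentiable one_ne_zero
  have hsym : ∀ a b : ℝ × ℝ, fderiv ℝ (fderiv ℝ f) p a b = fderiv ℝ (fderiv ℝ f) p b a := by
    intro a b
    exact second_derivative_symmetric (fun y => (hf.differentiable (by simp) y).hasFDerivAt)
      (hd p).hasFDerivAt a b
  have key : ∀ u : ℝ × ℝ, fderiv ℝ (fun q => fderiv ℝ f q u) p
      = (ContinuousLinearMap.apply ℝ ℝ u).comp (fderiv ℝ (fderiv ℝ f) p) := by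
    intro u
    exact ((ContinuousLinearMap.apply ℝ ℝ u).hasFDerivAt.comp p (hd p).hasFDerivAt).fderiv
  rw [key v, key w]
  simpa using hsym w v

lemma clairautXT {f : ℝ × ℝ → ℝ} (hf : ContDiff ℝ (⊤ : ℕ∞) f) (p : ℝ × ℝ) :
    DT (DX f) p = DX (DT f) p :=
  clairaut hf p (0, 1) (1, 0)

/-- First mixed partial, computed by differentiating the HJB equation once in `ξ`. -/
lemma mixed1 (c : ℝ) (F : ℝ × ℝ → ℝ) (hF : ContDiff ℝ (⊤ : ℕ∞) F) {α t ξ : ℝ}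
    (hξ : ξ ∈ Ioo α 1)
    (hne : ∀ y ∈ Ioo α 1, DX (DX F) (t, y) ≠ 0)
    (hHJ : ∀ y ∈ Ioo α 1, DT F (t, y) = c * DX F (t, y) ^ 2 / DX (DX F) (t, y)) :
    DT (DX F) (t, ξ)
      = c * (2 * DX F (t, ξ) * DX (DX F) (t, ξ) ^ 2
          - DX F (t, ξ) ^ 2 * DX (DX (DX F)) (t, ξ)) / DX (DX F) (t, ξ) ^ 2 := by
  have dF : Differentiable ℝ (DT F) := (smoothDT hF).differentiable (by simp)
  have dDX : Differentiable ℝ (DX F) := (smoothDX hF).differentiable (by simp)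
  have dDXX : Differentiable ℝ (DX (DX F)) := (smoothDX (smoothDX hF)).differentiable (by simp)
  have hps : HasDerivAt (fun y => DT F (t, y)) (DX (DT F) (t, ξ)) ξ := partY dF t ξ
  have hH1 : HasDerivAt (fun y => c * DX F (t, y) ^ 2 / DX (DX F) (t, y))
      (c * (2 * DX F (t, ξ) * DX (DX F) (t, ξ) ^ 2
          - DX F (t, ξ) ^ 2 * DX (DX (DX F)) (t, ξ)) / DX (DX F) (t, ξ) ^ 2) ξ := by
    have h := (((partY dDX t ξ).pow 2).const_mul c).div (partY dDXX t ξ) (hne ξ hξ)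
    refine h.congr_deriv ?_
    simp only [Pi.mul_apply, Pi.pow_apply, Pi.neg_apply, Pi.sub_apply]
    push_cast
    field_simp
  calc DT (DX F) (t, ξ) = DX (DT F) (t, ξ) := clairautXT hF (t, ξ)
    _ = deriv (fun y => DT F (t, y)) ξ := hps.deriv.symm
    _ = deriv (fun y => c * DX F (t, y) ^ 2 / DX (DX F) (t, y)) ξ := by
        apply Filter.EventuallyEq.deriv_eq
        filter_upwards [Ioo_mem_nhds hξ.1 hξ.2] with y hy using hHJ y hy
    _ = _ := hH1.deriv

/-- Second mixed partial, computed by differentiating the HJB equation twice in `ξ`. -/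
lemma mixed2 (c : ℝ) (F : ℝ × ℝ → ℝ) (hF : ContDiff ℝ (⊤ : ℕ∞) F) {α t ξ : ℝ}
    (hξ : ξ ∈ Ioo α 1)
    (hne : ∀ y ∈ Ioo α 1, DX (DX F) (t, y) ≠ 0)
    (hHJ : ∀ y ∈ Ioo α 1, DT F (t, y) = c * DX F (t, y) ^ 2 / DX (DX F) (t, y)) :
    DT (DX (DX F)) (t, ξ)
      = c * (2 * DX (DX F) (t, ξ) ^ 5
          - 2 * DX F (t, ξ) * DX (DX F) (t, ξ) ^ 3 * DX (DX (DX F)) (t, ξ)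
          - DX F (t, ξ) ^ 2 * DX (DX F) (t, ξ) ^ 2 * DX (DX (DX (DX F))) (t, ξ)
          + 2 * DX F (t, ξ) ^ 2 * DX (DX F) (t, ξ) * DX (DX (DX F)) (t, ξ) ^ 2)
        / DX (DX F) (t, ξ) ^ 4 := by
  have dDX : Differentiable ℝ (DX F) := (smoothDX hF).differentiable (by simp)
  have dDXX : Differentiable ℝ (DX (DX F)) := (smoothDX (smoothDX hF)).differentiable (by simp)
  have dDXXX : Differentiable ℝ (DX (DX (DX F))) :=
    (smoothDX (smoothDX (smoothDX hF))).differentiable (by simp)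
  have dDXDT : Differentiable ℝ (DX (DT F)) := (smoothDX (smoothDT hF)).differentiable (by simp)
  have h2 : DT (DX F) = DX (DT F) := funext fun q => clairautXT hF q
  have hKy : ∀ y ∈ Ioo α 1, DX (DT F) (t, y)
      = c * (2 * DX F (t, y) * DX (DX F) (t, y) ^ 2
          - DX F (t, y) ^ 2 * DX (DX (DX F)) (t, y)) / DX (DX F) (t, y) ^ 2 := by
    intro y hy
    rw [← h2]
    exact mixed1 c F hF hy hne hHJ
  have hps : HasDerivAt (fun y => DX (DT F) (t, y)) (DX (DX (DT F)) (t, ξ)) ξ := partY dDXDT t ξ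
  have hK : HasDerivAt (fun y => c * (2 * DX F (t, y) * DX (DX F) (t, y) ^ 2
          - DX F (t, y) ^ 2 * DX (DX (DX F)) (t, y)) / DX (DX F) (t, y) ^ 2)
      (c * (2 * DX (DX F) (t, ξ) ^ 5
          - 2 * DX F (t, ξ) * DX (DX F) (t, ξ) ^ 3 * DX (DX (DX F)) (t, ξ)
          - DX F (t, ξ) ^ 2 * DX (DX F) (t, ξ) ^ 2 * DX (DX (DX (DX F))) (t, ξ)
          + 2 * DX F (t, ξ) ^ 2 * DX (DX F) (t, ξ) * DX (DX (DX F)) (t, ξ) ^ 2)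
        / DX (DX F) (t, ξ) ^ 4) ξ := by
    have h := (((((partY dDX t ξ).const_mul (2 : ℝ)).mul ((partY dDXX t ξ).pow 2)).sub
        (((partY dDX t ξ).pow 2).mul (partY dDXXX t ξ))).const_mul c).div
        ((partY dDXX t ξ).pow 2) (pow_ne_zero 2 (hne ξ hξ))
    refine h.congr_deriv ?_
    simp only [Pi.mul_apply, Pi.pow_apply, Pi.neg_apply, Pi.sub_apply]
    push_cast
    field_simp
    ring
  calc DT (DX (DX F)) (t, ξ) = DX (DT (DX F)) (t, ξ) := clairautXT (smoothDX hF) (t, ξ)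
    _ = DX (DX (DT F)) (t, ξ) := by rw [h2]
    _ = deriv (fun y => DX (DT F) (t, y)) ξ := hps.deriv.symm
    _ = deriv (fun y => c * (2 * DX F (t, y) * DX (DX F) (t, y) ^ 2
          - DX F (t, y) ^ 2 * DX (DX (DX F)) (t, y)) / DX (DX F) (t, y) ^ 2) ξ := by
        apply Filter.EventuallyEq.deriv_eq
        filter_upwards [Ioo_mem_nhds hξ.1 hξ.2] with y hy using hKy y hy
    _ = _ := hK.deriv

/-- The risk tolerance function `R = -Q_ξ/Q_ξξ` satisfies the autonomous
fast-diffusion PDE `R_t + (λ₀²/2) R² R_ξξ = 0` on `(0,T) × (α,1)`. -/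
theorem risk_tolerance_pde
    (α T lam0 : ℝ) (hα : α ∈ Ioo (0 : ℝ) 1) (hT : 0 < T)
    (Q : ℝ → ℝ → ℝ)
    (hQ : ContDiff ℝ (⊤ : ℕ∞) (fun p : ℝ × ℝ => Q p.1 p.2))
    (hQξ : ∀ t ∈ Icc (0 : ℝ) T, ∀ ξ ∈ Icc α 1, 0 < deriv (Q t) ξ)
    (hQξξ : ∀ t ∈ Icc (0 : ℝ) T, ∀ ξ ∈ Icc α 1, deriv (deriv (Q t)) ξ < 0)
    (R : ℝ → ℝ → ℝ)
    (hR : ∀ t ξ, R t ξ = -(deriv (Q t) ξ) / deriv (deriv (Q t)) ξ)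
    (hHJB : ∀ t ∈ Ico (0 : ℝ) T, ∀ ξ ∈ Ioo α 1,
      deriv (fun s => Q s ξ) t
        - lam0 ^ 2 / 2 * (deriv (Q t) ξ) ^ 2 / deriv (deriv (Q t)) ξ = 0) :
    ∀ t ∈ Ioo (0 : ℝ) T, ∀ ξ ∈ Ioo α 1,
      deriv (fun s => R s ξ) t
        + lam0 ^ 2 / 2 * (R t ξ) ^ 2 * deriv (deriv (R t)) ξ = 0 := by
  intro t ht ξ hξ
  set F : ℝ × ℝ → ℝ := fun p : ℝ × ℝ => Q p.1 p.2 with hFdef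
  have hF : ContDiff ℝ (⊤ : ℕ∞) F := hQ
  have dF : Differentiable ℝ F := hF.differentiable (by simp)
  have dDX : Differentiable ℝ (DX F) := (smoothDX hF).differentiable (by simp)
  have dDXX : Differentiable ℝ (DX (DX F)) := (smoothDX (smoothDX hF)).differentiable (by simp)
  have dDXXX : Differentiable ℝ (DX (DX (DX F))) :=
    (smoothDX (smoothDX (smoothDX hF))).differentiable (by simp)
  -- identify one-variable derivatives with partials
  have A1 : ∀ s y, deriv (Q s) y = DX F (s, y) := fun s y => (partY dF s y).deriv
  have A2 : ∀ s y, deriv (deriv (Q s)) y = DX (DX F) (s, y) := by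
    intro s y
    have h1 : deriv (Q s) = fun y => DX F (s, y) := funext (A1 s)
    rw [h1]
    exact (partY dDX s y).deriv
  have htIcc : t ∈ Icc (0 : ℝ) T := ⟨ht.1.le, ht.2.le⟩
  have hne : ∀ y ∈ Ioo α 1, DX (DX F) (t, y) ≠ 0 := by
    intro y hy
    have := hQξξ t htIcc y ⟨hy.1.le, hy.2.le⟩
    rw [A2] at this
    exact this.ne
  have hb : DX (DX F) (t, ξ) ≠ 0 := hne ξ hξ
  -- the HJB equation in partial-derivative form
  have hHJ : ∀ y ∈ Ioo α 1, DT F (t, y)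
      = lam0 ^ 2 / 2 * DX F (t, y) ^ 2 / DX (DX F) (t, y) := by
    intro y hy
    have h0 := hHJB t ⟨ht.1.le, ht.2⟩ y hy
    have hd : deriv (fun s => Q s y) t = DT F (t, y) := (partX dF t y).deriv
    rw [hd, A1, A2] at h0
    linarith
  -- time derivative of R
  have hfun1 : (fun s => R s ξ) = fun s => -DX F (s, ξ) / DX (DX F) (s, ξ) := by
    funext s
    rw [hR s ξ, A1 s ξ, A2 s ξ]
  have hT1 : HasDerivAt (fun s => -DX F (s, ξ) / DX (DX F) (s, ξ))
      ((-DT (DX F) (t, ξ) * DX (DX F) (t, ξ)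
        - -DX F (t, ξ) * DT (DX (DX F)) (t, ξ)) / DX (DX F) (t, ξ) ^ 2) t :=
    (partX dDX t ξ).neg.div (partX dDXX t ξ) hb
  have e1 : deriv (fun s => R s ξ) t
      = (-DT (DX F) (t, ξ) * DX (DX F) (t, ξ)
        - -DX F (t, ξ) * DT (DX (DX F)) (t, ξ)) / DX (DX F) (t, ξ) ^ 2 := by
    rw [hfun1]; exact hT1.deriv
  -- spatial derivatives of R
  have hfunRt : R t = fun y => -DX F (t, y) / DX (DX F) (t, y) := by
    funext y
    rw [hR t y, A1 t y, A2 t y]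
  have hderivRt : ∀ y ∈ Ioo α 1, deriv (R t) y
      = (-DX (DX F) (t, y) * DX (DX F) (t, y)
        - -DX F (t, y) * DX (DX (DX F)) (t, y)) / DX (DX F) (t, y) ^ 2 := by
    intro y hy
    rw [hfunRt]
    exact ((partY dDX t y).neg.div (partY dDXX t y) (hne y hy)).deriv
  have hS : HasDerivAt (fun y => (-DX (DX F) (t, y) * DX (DX F) (t, y)
        - -DX F (t, y) * DX (DX (DX F)) (t, y)) / DX (DX F) (t, y) ^ 2)
      ((DX F (t, ξ) * DX (DX F) (t, ξ) ^ 2 * DX (DX (DX (DX F))) (t, ξ)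
        + DX (DX F) (t, ξ) ^ 3 * DX (DX (DX F)) (t, ξ)
        - 2 * DX F (t, ξ) * DX (DX F) (t, ξ) * DX (DX (DX F)) (t, ξ) ^ 2)
        / DX (DX F) (t, ξ) ^ 4) ξ := by
    have dDXXXX : Differentiable ℝ (DX (DX (DX (DX F)))) :=
      (smoothDX (smoothDX (smoothDX (smoothDX hF)))).differentiable (by simp)
    have h := ((((partY dDXX t ξ).neg.mul (partY dDXX t ξ)).sub
        ((partY dDX t ξ).neg.mul (partY dDXXX t ξ))).div
        ((partY dDXX t ξ).pow 2) (pow_ne_zero 2 hb))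
    refine h.congr_deriv ?_
    simp only [Pi.mul_apply, Pi.pow_apply, Pi.neg_apply, Pi.sub_apply]
    push_cast
    field_simp
    ring
  have e2 : deriv (deriv (R t)) ξ
      = (DX F (t, ξ) * DX (DX F) (t, ξ) ^ 2 * DX (DX (DX (DX F))) (t, ξ)
        + DX (DX F) (t, ξ) ^ 3 * DX (DX (DX F)) (t, ξ)
        - 2 * DX F (t, ξ) * DX (DX F) (t, ξ) * DX (DX (DX F)) (t, ξ) ^ 2)
        / DX (DX F) (t, ξ) ^ 4 := by
    have hev : deriv (R t) =ᶠ[nhds ξ] fun y => (-DX (DX F) (t, y) * DX (DX F) (t, y)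
        - -DX F (t, y) * DX (DX (DX F)) (t, y)) / DX (DX F) (t, y) ^ 2 := by
      filter_upwards [Ioo_mem_nhds hξ.1 hξ.2] with y hy using hderivRt y hy
    exact hev.deriv_eq.trans hS.deriv
  have hRval : R t ξ = -DX F (t, ξ) / DX (DX F) (t, ξ) := by
    rw [hR t ξ, A1 t ξ, A2 t ξ]
  rw [e1, e2, hRval, mixed1 (lam0 ^ 2 / 2) F hF hξ hne hHJ,
    mixed2 (lam0 ^ 2 / 2) F hF hξ hne hHJ]
  field_simp
  ring
end

section
/- The identity (D₁ + D₂)(D₁ D₁ u) = R·(R''·(3R' - 2) + R·R''')·(D₁ u) holds on [α,1]; explicitly, R·(R·(R u')')' + R²·(R·(R u')')'' = R·(R''·(3R' - 2) + R·R''')·R·u'. -/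
/-!
Write `v := u'`. Away from the zeros of `u''`, the definition `R = -u'/u''` says exactly
`R v' = -v`, so every derivative of `v` produced by the product rule can be traded for `-v / R`.
Hence `(R v)' = (R' - 1) v`, `(R (R v)')' = R R'' v + (R' - 1)² v`, and one more
differentiation expresses the left-hand side as a polynomial in `R, R', R'', R'''` times `v`.
-/

open Set Filter Topology

noncomputable def D₁ (R f : ℝ → ℝ) : ℝ → ℝ := fun x => R x * deriv f x

section

variable {R u : ℝ → ℝ} {U : Set ℝ} {x : ℝ}

theorem deriv_D₁_of_mul_deriv_deriv_eq_neg (hR : DifferentiableAt ℝ R x)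
    (hu : DifferentiableAt ℝ (deriv u) x) (hRu : R x * deriv (deriv u) x = -deriv u x) :
    deriv (D₁ R u) x = (deriv R x - 1) * deriv u x := by
  unfold D₁
  rw [deriv_fun_mul hR hu]
  linear_combination hRu

variable (hU : IsOpen U) (hu : DifferentiableOn ℝ (deriv u) U)
  (hRu : ∀ y ∈ U, R y * deriv (deriv u) y = -deriv u y)
include hU hu hRu

theorem deriv_D₁_D₁ (hR : ContDiffOn ℝ 2 R U) (hx : x ∈ U) :
    deriv (D₁ R (D₁ R u)) x
      = deriv (deriv R) x * R x * deriv u x + (deriv R x - 1) ^ 2 * deriv u x := by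
  have hUx : U ∈ 𝓝 x := hU.mem_nhds hx
  have hD₁ : D₁ R (D₁ R u) =ᶠ[𝓝 x] fun y => R y * ((deriv R y - 1) * deriv u y) := by
    filter_upwards [hUx] with y hy
    have hUy : U ∈ 𝓝 y := hU.mem_nhds hy
    rw [D₁, deriv_D₁_of_mul_deriv_deriv_eq_neg ((hR.contDiffAt hUy).differentiableAt (by norm_num))
      ((hu y hy).differentiableAt hUy) (hRu y hy)]
  have dR := (hR.contDiffAt hUx).differentiableAt (by norm_num)
  have dR' := ((hR.deriv_of_isOpen hU (m := 1) (by norm_num)).contDiffAt hUx).differentiableAt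
    (by norm_num)
  have du := (hu x hx).differentiableAt hUx
  rw [hD₁.deriv_eq, deriv_fun_mul (d := fun y => (deriv R y - 1) * deriv u y) dR
      ((dR'.sub_const 1).mul du), deriv_fun_mul (dR'.sub_const 1) du, deriv_sub_const]
  linear_combination (deriv R x - 1) * hRu x hx

theorem deriv_deriv_D₁_D₁ (hR : ContDiffOn ℝ 3 R U) (hx : x ∈ U) :
    deriv (deriv (D₁ R (D₁ R u))) x
      = deriv (deriv (deriv R)) x * R x * deriv u x
        + deriv (deriv R) x * deriv R x * deriv u x
        + deriv (deriv R) x * R x * deriv (deriv u) x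
        + 2 * (deriv R x - 1) * deriv (deriv R) x * deriv u x
        + (deriv R x - 1) ^ 2 * deriv (deriv u) x := by
  have hUx : U ∈ 𝓝 x := hU.mem_nhds hx
  have hD₁ : deriv (D₁ R (D₁ R u)) =ᶠ[𝓝 x] fun y => deriv (deriv R) y * R y * deriv u y
      + (deriv R y - 1) ^ 2 * deriv u y := by
    filter_upwards [hUx] with y hy
    exact deriv_D₁_D₁ hU hu hRu (hR.of_le (by norm_num)) hy
  have hR' : ContDiffOn ℝ 2 (deriv R) U := hR.deriv_of_isOpen hU (by norm_num)
  have hR'' : ContDiffOn ℝ 1 (deriv (deriv R)) U := hR'.deriv_of_isOpen hU (by norm_num)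
  have dR := (hR.contDiffAt hUx).differentiableAt (by norm_num)
  have dR' := (hR'.contDiffAt hUx).differentiableAt (by norm_num)
  have dR'' := (hR''.contDiffAt hUx).differentiableAt (by norm_num)
  have du := (hu x hx).differentiableAt hUx
  have d1 : DifferentiableAt ℝ (fun y => deriv (deriv R) y * R y) x := dR''.mul dR
  have d2 : DifferentiableAt ℝ (fun y => (deriv R y - 1) ^ 2) x := (dR'.sub_const 1).pow 2
  have hsq : deriv (fun y => (deriv R y - 1) ^ 2) x = 2 * (deriv R x - 1) * deriv (deriv R) x := by
    rw [deriv_fun_pow (dR'.sub_const 1), deriv_sub_const]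
    push_cast
    ring
  rw [hD₁.deriv_eq, deriv_fun_add (f := fun y => deriv (deriv R) y * R y * deriv u y)
      (g := fun y => (deriv R y - 1) ^ 2 * deriv u y) (d1.mul du) (d2.mul du),
    deriv_fun_mul d1 du, deriv_fun_mul dR'' dR, deriv_fun_mul d2 du, hsq]
  ring

end

theorem identity_D1_plus_D2_of_D1D1_general
    (α : ℝ)
    (u : ℝ → ℝ) (hu : ContDiff ℝ 5 u)
    (hu'' : ∀ ξ ∈ Icc α 1, deriv (deriv u) ξ < 0)
    (R : ℝ → ℝ) (hR : ∀ ξ, R ξ = -(deriv u ξ) / deriv (deriv u) ξ) :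
    ∀ ξ ∈ Icc α 1,
      R ξ * deriv (fun x => R x * deriv (fun w => R w * deriv u w) x) ξ
        + (R ξ) ^ 2
            * deriv (deriv (fun x => R x * deriv (fun w => R w * deriv u w) x)) ξ
      = R ξ * (deriv (deriv R) ξ * (3 * deriv R ξ - 2)
            + R ξ * deriv (deriv (deriv R)) ξ) * (R ξ * deriv u ξ) := by
  have hv : ContDiff ℝ 4 (deriv u) := hu.deriv'
  have hw : ContDiff ℝ 3 (deriv (deriv u)) := hv.deriv'
  set U : Set ℝ := {x | deriv (deriv u) x ≠ 0}
  have hU : IsOpen U := isOpen_ne_fun hw.continuous continuous_const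
  have hRU : ContDiffOn ℝ 3 R U := by
    rw [funext hR]
    exact ((hv.of_le (by norm_num)).neg.contDiffOn).div hw.contDiffOn fun x hx => hx
  have hRu : ∀ x ∈ U, R x * deriv (deriv u) x = -deriv u x := fun x hx => by
    rw [hR, div_mul_cancel₀ _ hx]
  have du : DifferentiableOn ℝ (deriv u) U := (hv.differentiable (by norm_num)).differentiableOn
  intro ξ hξ
  have hξU : ξ ∈ U := (hu'' ξ hξ).ne
  change R ξ * deriv (D₁ R (D₁ R u)) ξ + R ξ ^ 2 * deriv (deriv (D₁ R (D₁ R u))) ξ = _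
  rw [deriv_D₁_D₁ hU du hRu (hRU.of_le (by norm_num)) hξU, deriv_deriv_D₁_D₁ hU du hRu hRU hξU]
  linear_combination (R ξ ^ 2 * deriv (deriv R) ξ + R ξ * (deriv R ξ - 1) ^ 2) * hRu ξ hξU

/-- `(D₁ + D₂)(D₁ D₁ u) = R (R''(3R' - 2) + R R''') (D₁ u)` on `[α,1]`,
where `R = -u'/u''`; explicitly,
`R (R (R u')')' + R² (R (R u')')'' = R (R''(3R' - 2) + R R''') R u'`. -/
theorem identity_D1_plus_D2_of_D1D1
    (α : ℝ) (hα : α ∈ Ioo (0 : ℝ) 1)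
    (u : ℝ → ℝ) (hu : ContDiff ℝ 5 u)
    (hu' : ∀ ξ ∈ Icc α 1, 0 < deriv u ξ)
    (hu'' : ∀ ξ ∈ Icc α 1, deriv (deriv u) ξ < 0)
    (R : ℝ → ℝ) (hR : ∀ ξ, R ξ = -(deriv u ξ) / deriv (deriv u) ξ) :
    ∀ ξ ∈ Icc α 1,
      R ξ * deriv (fun x => R x * deriv (fun w => R w * deriv u w) x) ξ
        + (R ξ) ^ 2
            * deriv (deriv (fun x => R x * deriv (fun w => R w * deriv u w) x)) ξ
      = R ξ * (deriv (deriv R) ξ * (3 * deriv R ξ - 2)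
            + R ξ * deriv (deriv (deriv R)) ξ) * (R ξ * deriv u ξ) :=
  identity_D1_plus_D2_of_D1D1_general α u hu hu'' R hR
end

section
/- For all (t,ξ) ∈ (0,T) × (α,1), the transformed function q satisfies the constant-coefficient heat equation along the transformation: q_t(t, z(t,ξ)) + (λ₀²/2) · q_zz(t, z(t,ξ)) = 0. -/
open Set Filter

private lemma hasDerivAt_uncurry_snd {f : ℝ × ℝ → ℝ} {a b : ℝ}
    (hf : DifferentiableAt ℝ f (a, b)) :
    HasDerivAt (fun y => f (a, y)) (fderiv ℝ f (a, b) (0, 1)) b := by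
  have h1 : HasDerivAt (fun y : ℝ => ((a, y) : ℝ × ℝ)) (0, 1) b :=
    HasDerivAt.prodMk (hasDerivAt_const b a) (hasDerivAt_id b)
  exact hf.hasFDerivAt.comp_hasDerivAt b h1

private lemma hasDerivAt_uncurry_fst {f : ℝ × ℝ → ℝ} {a b : ℝ}
    (hf : DifferentiableAt ℝ f (a, b)) :
    HasDerivAt (fun x => f (x, b)) (fderiv ℝ f (a, b) (1, 0)) a := by
  have h1 : HasDerivAt (fun x : ℝ => ((x, b) : ℝ × ℝ)) (1, 0) a :=
    HasDerivAt.prodMk (hasDerivAt_id a) (hasDerivAt_const a b)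
  exact hf.hasFDerivAt.comp_hasDerivAt a h1

private lemma hasDerivAt_comp_curve {f : ℝ × ℝ → ℝ} {γ : ℝ → ℝ} {x c u : ℝ}
    (hf : DifferentiableAt ℝ f (c, γ x)) (hγ : HasDerivAt γ u x) :
    HasDerivAt (fun y => f (c, γ y)) (u * fderiv ℝ f (c, γ x) (0, 1)) x := by
  have h1 : HasDerivAt (fun y : ℝ => ((c, γ y) : ℝ × ℝ)) (0, u) x :=
    HasDerivAt.prodMk (hasDerivAt_const x c) hγ
  have h2 := hf.hasFDerivAt.comp_hasDerivAt x h1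
  have e : fderiv ℝ f (c, γ x) (0, u) = u * fderiv ℝ f (c, γ x) (0, 1) := by
    have e2 : ((0:ℝ), u) = u • (((0:ℝ), (1:ℝ)) : ℝ × ℝ) := by simp
    rw [e2, map_smul]; simp
  rwa [e] at h2

private lemma hasDerivAt_comp_curve' {f : ℝ × ℝ → ℝ} {γ : ℝ → ℝ} {x u : ℝ}
    (hf : DifferentiableAt ℝ f (x, γ x)) (hγ : HasDerivAt γ u x) :
    HasDerivAt (fun s => f (s, γ s))
      (fderiv ℝ f (x, γ x) (1, 0) + u * fderiv ℝ f (x, γ x) (0, 1)) x := by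
  have h1 : HasDerivAt (fun s : ℝ => ((s, γ s) : ℝ × ℝ)) (1, u) x :=
    HasDerivAt.prodMk (hasDerivAt_id x) hγ
  have h2 := hf.hasFDerivAt.comp_hasDerivAt x h1
  have e : fderiv ℝ f (x, γ x) (1, u)
      = fderiv ℝ f (x, γ x) (1, 0) + u * fderiv ℝ f (x, γ x) (0, 1) := by
    have e2 : ((1:ℝ), u) = (((1:ℝ), (0:ℝ)) : ℝ × ℝ) + u • (((0:ℝ), (1:ℝ)) : ℝ × ℝ) := by simp
    rw [e2, map_add, map_smul]; simp
  rwa [e] at h2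

private lemma fderiv_clm_apply_const {A : ℝ × ℝ → (ℝ × ℝ) →L[ℝ] ℝ} {p : ℝ × ℝ}
    (hA : DifferentiableAt ℝ A p) (u v : ℝ × ℝ) :
    fderiv ℝ (fun x => A x u) p v = (fderiv ℝ A p v) u := by
  have h := hA.hasFDerivAt.clm_apply (hasFDerivAt_const u p)
  rw [h.fderiv]
  simp


/-- Under the change of variable `z(t,ξ) = -log Q_ξ(t,ξ) + (λ₀²/2)(T-t)`,
the transformed function `q` with `q(t, z(t,ξ)) = Q(t,ξ)` satisfies the
constant-coefficient heat equation `q_t + (λ₀²/2) q_zz = 0` along the transformation. -/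
theorem transformed_heat_equation
    (α T lam0 : ℝ) (hα : α ∈ Ioo (0 : ℝ) 1) (hT : 0 < T)
    (Q : ℝ → ℝ → ℝ)
    (hQ : ContDiff ℝ (⊤ : ℕ∞) (fun p : ℝ × ℝ => Q p.1 p.2))
    (hQξ : ∀ t ∈ Icc (0 : ℝ) T, ∀ ξ ∈ Icc α 1, 0 < deriv (Q t) ξ)
    (hQξξ : ∀ t ∈ Icc (0 : ℝ) T, ∀ ξ ∈ Icc α 1, deriv (deriv (Q t)) ξ < 0)
    (hHJB : ∀ t ∈ Ico (0 : ℝ) T, ∀ ξ ∈ Ioo α 1,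
      deriv (fun s => Q s ξ) t
        - lam0 ^ 2 / 2 * (deriv (Q t) ξ) ^ 2 / deriv (deriv (Q t)) ξ = 0)
    (z : ℝ → ℝ → ℝ)
    (hz : ∀ t ξ, z t ξ = -Real.log (deriv (Q t) ξ) + lam0 ^ 2 / 2 * (T - t))
    (q : ℝ → ℝ → ℝ)
    (hq : ContDiff ℝ 2 (fun p : ℝ × ℝ => q p.1 p.2))
    (hqQ : ∀ t ∈ Ioo (0 : ℝ) T, ∀ ξ ∈ Ioo α 1, q t (z t ξ) = Q t ξ) :
    ∀ t ∈ Ioo (0 : ℝ) T, ∀ ξ ∈ Ioo α 1,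
      deriv (fun s => q s (z t ξ)) t
        + lam0 ^ 2 / 2 * deriv (deriv (q t)) (z t ξ) = 0 := by
  intro t ht ξ hξ
  set L : ℝ := lam0 ^ 2 / 2 with hL
  set Qc : ℝ × ℝ → ℝ := fun p : ℝ × ℝ => Q p.1 p.2 with hQcdef
  set qc : ℝ × ℝ → ℝ := fun p : ℝ × ℝ => q p.1 p.2 with hqcdef
  set Q1 : ℝ × ℝ → ℝ := fun p => fderiv ℝ Qc p (1, 0) with hQ1def
  set Q2 : ℝ × ℝ → ℝ := fun p => fderiv ℝ Qc p (0, 1) with hQ2def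
  set Q22 : ℝ × ℝ → ℝ := fun p => fderiv ℝ Q2 p (0, 1) with hQ22def
  set q2 : ℝ × ℝ → ℝ := fun p => fderiv ℝ qc p (0, 1) with hq2def
  -- smoothness
  have hQc : ContDiff ℝ (⊤ : ℕ∞) Qc := hQ
  have hQdiff : Differentiable ℝ Qc := hQc.differentiable (by simp)
  have hQfd : ContDiff ℝ (⊤ : ℕ∞) (fderiv ℝ Qc) := hQc.fderiv_right (by simp)
  have hQ2c : ContDiff ℝ (⊤ : ℕ∞) Q2 := hQfd.clm_apply contDiff_const
  have hQ1c : ContDiff ℝ (⊤ : ℕ∞) Q1 := hQfd.clm_apply contDiff_const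
  have hQ22c : ContDiff ℝ (⊤ : ℕ∞) Q22 := (hQ2c.fderiv_right (by simp)).clm_apply contDiff_const
  have hq2c : ContDiff ℝ 1 q2 :=
    (hq.fderiv_right (by norm_num)).clm_apply contDiff_const
  have hqdiff : Differentiable ℝ qc := hq.differentiable (by norm_num)
  have hq2diff : Differentiable ℝ q2 := hq2c.differentiable one_ne_zero
  -- translations of deriv hypotheses
  have hderivQ : ∀ s y, deriv (Q s) y = Q2 (s, y) := fun s y =>
    (hasDerivAt_uncurry_snd (hQdiff (s, y))).deriv
  have hderivQQ : ∀ s y, deriv (deriv (Q s)) y = Q22 (s, y) := by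
    intro s y
    have e : deriv (Q s) = fun y => Q2 (s, y) := funext fun y => hderivQ s y
    rw [e]
    exact (hasDerivAt_uncurry_snd ((hQ2c.differentiable (by simp)) (s, y))).deriv
  have htmem : t ∈ Icc (0:ℝ) T := ⟨ht.1.le, ht.2.le⟩
  have ha : ∀ y ∈ Icc α 1, 0 < Q2 (t, y) := by
    intro y hy; rw [← hderivQ]; exact hQξ t htmem y hy
  have hb : ∀ y ∈ Icc α 1, Q22 (t, y) < 0 := by
    intro y hy; rw [← hderivQQ]; exact hQξξ t htmem y hy
  have hξmem : ξ ∈ Icc α 1 := ⟨hξ.1.le, hξ.2.le⟩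
  have haξ : Q2 (t, ξ) ≠ 0 := (ha ξ hξmem).ne'
  have hbξ : Q22 (t, ξ) ≠ 0 := (hb ξ hξmem).ne
  -- derivative of z in ξ
  have hz_ξ : ∀ y ∈ Icc α 1,
      HasDerivAt (z t) (-(Q22 (t, y) / Q2 (t, y))) y := by
    intro y hy
    have h2 : HasDerivAt (fun y => Q2 (t, y)) (Q22 (t, y)) y :=
      hasDerivAt_uncurry_snd ((hQ2c.differentiable (by simp)) (t, y))
    have hlog := (h2.log (ha y hy).ne').neg
    have hadd := hlog.add_const (L * (T - t))
    have e : z t = fun y => -Real.log (Q2 (t, y)) + L * (T - t) := by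
      funext y; rw [hz, hderivQ]
    rw [e]
    exact hadd
  -- derivative of z in t
  have hz_t : HasDerivAt (fun s => z s ξ)
      (-(fderiv ℝ Q2 (t, ξ) (1, 0) / Q2 (t, ξ)) - L) t := by
    have h2 : HasDerivAt (fun s => Q2 (s, ξ)) (fderiv ℝ Q2 (t, ξ) (1, 0)) t :=
      hasDerivAt_uncurry_fst ((hQ2c.differentiable (by simp)) (t, ξ))
    have hlog := (h2.log haξ).neg
    have hc : HasDerivAt (fun s : ℝ => L * (T - s)) (-L) t := by
      have := ((hasDerivAt_id t).const_sub T).const_mul L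
      exact this.congr_deriv (by ring)
    have e : (fun s => z s ξ) = fun s => -Real.log (Q2 (s, ξ)) + L * (T - s) := by
      funext s; rw [hz, hderivQ]
    rw [e]
    exact (hlog.add hc).congr_deriv (by ring)
  -- (A): q2 (t, z t y) = -(Q2)^2/Q22 on Ioo α 1
  have hA : ∀ y ∈ Ioo α 1, q2 (t, z t y) = -(Q2 (t, y)) ^ 2 / Q22 (t, y) := by
    intro y hy
    have hyI : y ∈ Icc α 1 := ⟨hy.1.le, hy.2.le⟩
    have hlhs : HasDerivAt (fun y' => qc (t, z t y'))
        (-(Q22 (t, y) / Q2 (t, y)) * q2 (t, z t y)) y :=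
      hasDerivAt_comp_curve (hqdiff (t, z t y)) (hz_ξ y hyI)
    have hrhs : HasDerivAt (fun y' => Qc (t, y')) (Q2 (t, y)) y :=
      hasDerivAt_uncurry_snd (hQdiff (t, y))
    have heq : (fun y' => qc (t, z t y')) =ᶠ[nhds y] (fun y' => Qc (t, y')) :=
      eventuallyEq_of_mem (isOpen_Ioo.mem_nhds hy) (fun x hx => hqQ t ht x hx)
    have hlhs' : HasDerivAt (fun y' => Qc (t, y'))
        (-(Q22 (t, y) / Q2 (t, y)) * q2 (t, z t y)) y :=
      HasDerivAt.congr_of_eventuallyEq hlhs heq.symm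
    have hkey := hlhs'.unique hrhs
    have ha' : Q2 (t, y) ≠ 0 := (ha y hyI).ne'
    have hb' : Q22 (t, y) ≠ 0 := (hb y hyI).ne
    field_simp at hkey ⊢
    nlinarith [hkey]
  -- abbreviations at the point
  set a : ℝ := Q2 (t, ξ) with hadef
  set b : ℝ := Q22 (t, ξ) with hbdef
  set g : ℝ → ℝ := fun y => -(Q2 (t, y)) ^ 2 / Q22 (t, y) with hgdef
  -- (B): differentiate (A) in ξ
  set q22z : ℝ := fderiv ℝ q2 (t, z t ξ) (0, 1) with hq22zdef
  have hQ2y : HasDerivAt (fun y => Q2 (t, y)) (Q22 (t, ξ)) ξ :=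
    hasDerivAt_uncurry_snd ((hQ2c.differentiable (by simp)) (t, ξ))
  have hQ22y : HasDerivAt (fun y => Q22 (t, y)) (fderiv ℝ Q22 (t, ξ) (0, 1)) ξ :=
    hasDerivAt_uncurry_snd ((hQ22c.differentiable (by simp)) (t, ξ))
  have hgdiff : DifferentiableAt ℝ g ξ :=
    ((hQ2y.differentiableAt.pow 2).neg.div hQ22y.differentiableAt hbξ)
  set Gξ : ℝ := deriv g ξ with hGdef
  have hG : HasDerivAt g Gξ ξ := hgdiff.hasDerivAt
  have hB : -(b / a) * q22z = Gξ := by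
    have hlhs : HasDerivAt (fun y => q2 (t, z t y)) (-(b / a) * q22z) ξ :=
      hasDerivAt_comp_curve (hq2diff (t, z t ξ)) (hz_ξ ξ hξmem)
    have heq : (fun y => q2 (t, z t y)) =ᶠ[nhds ξ] g :=
      eventuallyEq_of_mem (isOpen_Ioo.mem_nhds hξ) (fun x hx => hA x hx)
    exact (HasDerivAt.congr_of_eventuallyEq hlhs heq.symm).unique hG
  -- (C): the HJB identity and its ξ-derivative
  have hCeq : ∀ y ∈ Ioo α 1, Q1 (t, y) = -L * g y := by
    intro y hy
    have hyI : y ∈ Icc α 1 := ⟨hy.1.le, hy.2.le⟩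
    have h := hHJB t ⟨ht.1.le, ht.2⟩ y hy
    rw [hderivQ, hderivQQ] at h
    have e1 : deriv (fun s => Q s y) t = Q1 (t, y) :=
      (hasDerivAt_uncurry_fst (hQdiff (t, y))).deriv
    rw [e1] at h
    have e2 : -L * g y = L * Q2 (t, y) ^ 2 / Q22 (t, y) := by
      rw [hgdef]; field_simp
    rw [e2]; linarith
  set m : ℝ := fderiv ℝ Q1 (t, ξ) (0, 1) with hmdef
  have hC : m = -L * Gξ := by
    have hlhs : HasDerivAt (fun y => Q1 (t, y)) m ξ :=
      hasDerivAt_uncurry_snd ((hQ1c.differentiable (by simp)) (t, ξ))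
    have hrhs : HasDerivAt (fun y => -L * g y) (-L * Gξ) ξ := hG.const_mul (-L)
    have heq : (fun y => Q1 (t, y)) =ᶠ[nhds ξ] (fun y => -L * g y) :=
      eventuallyEq_of_mem (isOpen_Ioo.mem_nhds hξ) (fun x hx => hCeq x hx)
    exact ((HasDerivAt.congr_of_eventuallyEq hrhs heq).unique hlhs).symm
  -- Clairaut
  have hclair : fderiv ℝ Q2 (t, ξ) (1, 0) = m := by
    have hf' : ∀ y, HasFDerivAt Qc (fderiv ℝ Qc y) y := fun y => (hQdiff y).hasFDerivAt
    have hx : HasFDerivAt (fderiv ℝ Qc) (fderiv ℝ (fderiv ℝ Qc) (t, ξ)) (t, ξ) :=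
      ((hQfd.differentiable (by simp)) (t, ξ)).hasFDerivAt
    have hsym := second_derivative_symmetric hf' hx ((1:ℝ), (0:ℝ)) ((0:ℝ), (1:ℝ))
    have e1 : fderiv ℝ Q2 (t, ξ) (1, 0)
        = (fderiv ℝ (fderiv ℝ Qc) (t, ξ) (1, 0)) (0, 1) := by
      rw [hQ2def]
      exact fderiv_clm_apply_const ((hQfd.differentiable (by simp)) (t, ξ)) (0, 1) (1, 0)
    have e2 : m = (fderiv ℝ (fderiv ℝ Qc) (t, ξ) (0, 1)) (1, 0) := by
      rw [hmdef, hQ1def]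
      exact fderiv_clm_apply_const ((hQfd.differentiable (by simp)) (t, ξ)) (1, 0) (0, 1)
    rw [e1, e2]
    exact hsym
  -- (D): differentiate the identity in t
  set q1z : ℝ := fderiv ℝ qc (t, z t ξ) (1, 0) with hq1zdef
  set q2z : ℝ := q2 (t, z t ξ) with hq2zdef
  have hD : q1z + (-(m / a) - L) * q2z = Q1 (t, ξ) := by
    have hlhs : HasDerivAt (fun s => qc (s, z s ξ))
        (q1z + (-(fderiv ℝ Q2 (t, ξ) (1, 0) / a) - L) * q2z) t :=
      hasDerivAt_comp_curve' (hqdiff (t, z t ξ)) hz_t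
    rw [hclair] at hlhs
    have hrhs : HasDerivAt (fun s => Qc (s, ξ)) (Q1 (t, ξ)) t :=
      hasDerivAt_uncurry_fst (hQdiff (t, ξ))
    have heq : (fun s => qc (s, z s ξ)) =ᶠ[nhds t] (fun s => Qc (s, ξ)) :=
      eventuallyEq_of_mem (isOpen_Ioo.mem_nhds ht) (fun s hs => hqQ s hs ξ hξ)
    exact (HasDerivAt.congr_of_eventuallyEq hlhs heq.symm).unique hrhs
  -- rewrite the goal
  have egoal1 : deriv (fun s => q s (z t ξ)) t = q1z :=
    (hasDerivAt_uncurry_fst (hqdiff (t, z t ξ))).deriv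
  have egoal2 : deriv (deriv (q t)) (z t ξ) = q22z := by
    have e : deriv (q t) = fun y => q2 (t, y) :=
      funext fun y => (hasDerivAt_uncurry_snd (hqdiff (t, y))).deriv
    rw [e]
    exact (hasDerivAt_uncurry_snd (hq2diff (t, z t ξ))).deriv
  rw [egoal1, egoal2]
  -- final algebra
  have hAξ : q2z = -a ^ 2 / b := hA ξ hξ
  have hE : Q1 (t, ξ) = -L * (-a ^ 2 / b) := by
    have := hCeq ξ hξ
    rw [hgdef] at this
    exact this
  have hLG : L * Gξ = -m := by linarith
  have E2 : b * q22z = -(Gξ * a) := by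
    field_simp at hB
    linarith
  have Ezz : L * q22z = m * a / b := by
    rw [eq_div_iff hbξ]
    have h5 : L * (b * q22z) = m * a := by
      rw [E2]
      calc L * -(Gξ * a) = -(L * Gξ) * a := by ring
        _ = m * a := by rw [hLG]; ring
    linarith [h5]
  have E4 : q1z = -(m * a) / b := by
    rw [eq_div_iff hbξ]
    rw [hE, hAξ] at hD
    field_simp at hD
    have hab : a * b ≠ 0 := mul_ne_zero haξ hbξ
    have h6 : q1z * b * (a * b) = -(m * a) * (a * b) := by linear_combination (a * b) * hD
    exact mul_right_cancel₀ hab h6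
  rw [E4, Ezz]
  field_simp
  ring
end

section
/- The first-order correction Q¹ satisfies the sourced PDE (∂_t + A₀ + B₀) Q¹ + λ₀·(λ_{1,0}·(x - x̄) + λ_{0,1}·(y - ȳ))·(D₁Q)(t,ξ) = 0 on (0,T) × (α,1) × ℝ², together with the terminal condition Q¹(T,ξ,x,y) = 0 for all (ξ,x,y). -/
open Set

noncomputable def pdT (g : ℝ × ℝ → ℝ) (p : ℝ × ℝ) : ℝ := fderiv ℝ g p (1, 0)
noncomputable def pdX (g : ℝ × ℝ → ℝ) (p : ℝ × ℝ) : ℝ := fderiv ℝ g p (0, 1)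

lemma pd_sliceX {g : ℝ × ℝ → ℝ} (hg : ContDiff ℝ (⊤ : ℕ∞) g) (t ξ : ℝ) :
    HasDerivAt (fun z => g (t, z)) (pdX g (t, ξ)) ξ := by
  have h := (hg.differentiable (by simp) (t, ξ)).hasFDerivAt
  have hι : HasDerivAt (fun z : ℝ => ((t, z) : ℝ × ℝ)) ((0 : ℝ), (1 : ℝ)) ξ :=
    (hasDerivAt_const ξ t).prodMk (hasDerivAt_id ξ)
  exact h.comp_hasDerivAt ξ hι

lemma pd_sliceT {g : ℝ × ℝ → ℝ} (hg : ContDiff ℝ (⊤ : ℕ∞) g) (t ξ : ℝ) :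
    HasDerivAt (fun s => g (s, ξ)) (pdT g (t, ξ)) t := by
  have h := (hg.differentiable (by simp) (t, ξ)).hasFDerivAt
  have hι : HasDerivAt (fun s : ℝ => ((s, ξ) : ℝ × ℝ)) ((1 : ℝ), (0 : ℝ)) t :=
    (hasDerivAt_id t).prodMk (hasDerivAt_const t ξ)
  exact h.comp_hasDerivAt t hι

lemma pdX_contDiff {g : ℝ × ℝ → ℝ} (hg : ContDiff ℝ (⊤ : ℕ∞) g) : ContDiff ℝ (⊤ : ℕ∞) (pdX g) :=
  (hg.fderiv_right (by simp)).clm_apply contDiff_const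

lemma pdT_contDiff {g : ℝ × ℝ → ℝ} (hg : ContDiff ℝ (⊤ : ℕ∞) g) : ContDiff ℝ (⊤ : ℕ∞) (pdT g) :=
  (hg.fderiv_right (by simp)).clm_apply contDiff_const

lemma pd_comm {g : ℝ × ℝ → ℝ} (hg : ContDiff ℝ (⊤ : ℕ∞) g) (p : ℝ × ℝ) :
    pdT (pdX g) p = pdX (pdT g) p := by
  have hsym : IsSymmSndFDerivAt ℝ g p :=
    (hg.contDiffAt).isSymmSndFDerivAt (by rw [minSmoothness_of_isRCLikeNormedField]; exact WithTop.coe_le_coe.mpr (le_top : (2 : ℕ∞) ≤ ⊤))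
  have hdf : DifferentiableAt ℝ (fderiv ℝ g) p :=
    ((hg.fderiv_right (m := (⊤ : ℕ∞)) (by simp)).differentiable (by simp)) p
  have h1 : pdT (pdX g) p = fderiv ℝ (fderiv ℝ g) p (1, 0) (0, 1) := by
    unfold pdT pdX
    rw [fderiv_clm_apply hdf (differentiableAt_const _)]
    simp
  have h2 : pdX (pdT g) p = fderiv ℝ (fderiv ℝ g) p (0, 1) (1, 0) := by
    unfold pdT pdX
    rw [fderiv_clm_apply hdf (differentiableAt_const _)]
    simp
  rw [h1, h2, hsym]


-- general-direction derivative of -(P1)^2/P2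
lemma hd_negsq_div {P1 P2 : ℝ → ℝ} {z d1 d2 : ℝ}
    (h1 : HasDerivAt P1 d1 z) (h2 : HasDerivAt P2 d2 z) (h0 : P2 z ≠ 0) :
    HasDerivAt (fun w => -(P1 w) ^ 2 / P2 w)
      (((P1 z) ^ 2 * d2 - 2 * P1 z * d1 * P2 z) / (P2 z) ^ 2) z := by
  have h := ((h1.pow 2).neg).div h2 h0
  refine h.congr_deriv ?_
  simp only [Pi.pow_apply, Pi.mul_apply, Pi.neg_apply, Pi.sub_apply, Pi.add_apply]
  field_simp
  ring

-- general-direction derivative of (2 P1^2 P2^2 - P1^3 P3)/P2^3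
lemma hd_Ggen {P1 P2 P3 : ℝ → ℝ} {z d1 d2 d3 : ℝ}
    (h1 : HasDerivAt P1 d1 z) (h2 : HasDerivAt P2 d2 z) (h3 : HasDerivAt P3 d3 z)
    (h0 : P2 z ≠ 0) :
    HasDerivAt (fun w => (2 * (P1 w) ^ 2 * (P2 w) ^ 2 - (P1 w) ^ 3 * P3 w) / (P2 w) ^ 3)
      (((4 * P1 z * (P2 z) ^ 2 * d1 + 4 * (P1 z) ^ 2 * P2 z * d2
          - 3 * (P1 z) ^ 2 * P3 z * d1 - (P1 z) ^ 3 * d3) * P2 z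
        - 3 * (2 * (P1 z) ^ 2 * (P2 z) ^ 2 - (P1 z) ^ 3 * P3 z) * d2) / (P2 z) ^ 4) z := by
  have h := ((((h1.pow 2).const_mul 2).mul (h2.pow 2)).sub ((h1.pow 3).mul h3)).div
    (h2.pow 3) (pow_ne_zero 3 h0)
  refine h.congr_deriv ?_
  simp only [Pi.pow_apply, Pi.mul_apply, Pi.neg_apply, Pi.sub_apply, Pi.add_apply]
  field_simp
  ring

-- ξ-direction: derivative of -(P1)^2/P2 when P1' = P2, P2' = P3
lemma hd_fxi {P1 P2 P3 : ℝ → ℝ} {z : ℝ}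
    (h1 : HasDerivAt P1 (P2 z) z) (h2 : HasDerivAt P2 (P3 z) z) (h0 : P2 z ≠ 0) :
    HasDerivAt (fun w => -(P1 w) ^ 2 / P2 w)
      (((P1 z) ^ 2 * P3 z - 2 * P1 z * (P2 z) ^ 2) / (P2 z) ^ 2) z := by
  have h := hd_negsq_div h1 h2 h0
  convert h using 1
  ring

-- ξ-direction derivative of G-form
lemma hd_Gxi {P1 P2 P3 P4 : ℝ → ℝ} {z : ℝ}
    (h1 : HasDerivAt P1 (P2 z) z) (h2 : HasDerivAt P2 (P3 z) z)
    (h3 : HasDerivAt P3 (P4 z) z) (h0 : P2 z ≠ 0) :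
    HasDerivAt (fun w => (2 * (P1 w) ^ 2 * (P2 w) ^ 2 - (P1 w) ^ 3 * P3 w) / (P2 w) ^ 3)
      ((4 * P1 z * (P2 z) ^ 4 - 5 * (P1 z) ^ 2 * (P2 z) ^ 2 * P3 z
        - (P1 z) ^ 3 * P2 z * P4 z + 3 * (P1 z) ^ 3 * (P3 z) ^ 2) / (P2 z) ^ 4) z := by
  have h := hd_Ggen h1 h2 h3 h0
  convert h using 1
  field_simp
  ring

-- derivative (ξ-direction) of the f₁ form
lemma hd_f1 {P1 P2 P3 P4 : ℝ → ℝ} {z : ℝ}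
    (h1 : HasDerivAt P1 (P2 z) z) (h2 : HasDerivAt P2 (P3 z) z)
    (h3 : HasDerivAt P3 (P4 z) z) (h0 : P2 z ≠ 0) :
    HasDerivAt (fun w => ((P1 w) ^ 2 * P3 w - 2 * P1 w * (P2 w) ^ 2) / (P2 w) ^ 2)
      (((P1 z) ^ 2 * P2 z * P4 z + 2 * P1 z * (P2 z) ^ 2 * P3 z - 2 * (P2 z) ^ 4
        - 2 * (P1 z) ^ 2 * (P3 z) ^ 2) / (P2 z) ^ 3) z := by
  have h := (((h1.pow 2).mul h3).sub (((h1.const_mul 2).mul (h2.pow 2)))).div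
    (h2.pow 2) (pow_ne_zero 2 h0)
  refine h.congr_deriv ?_
  simp only [Pi.pow_apply, Pi.mul_apply, Pi.neg_apply, Pi.sub_apply, Pi.add_apply]
  field_simp
  ring

-- derivative (ξ-direction) of the G₁ form
lemma hd_G1 {P1 P2 P3 P4 P5 : ℝ → ℝ} {z : ℝ}
    (h1 : HasDerivAt P1 (P2 z) z) (h2 : HasDerivAt P2 (P3 z) z)
    (h3 : HasDerivAt P3 (P4 z) z) (h4 : HasDerivAt P4 (P5 z) z) (h0 : P2 z ≠ 0) :
    HasDerivAt (fun w => (4 * P1 w * (P2 w) ^ 4 - 5 * (P1 w) ^ 2 * (P2 w) ^ 2 * P3 w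
        - (P1 w) ^ 3 * P2 w * P4 w + 3 * (P1 w) ^ 3 * (P3 w) ^ 2) / (P2 w) ^ 4)
      (((4 * (P2 z) ^ 5 + 6 * P1 z * (P2 z) ^ 3 * P3 z - (P1 z) ^ 2 * P2 z * (P3 z) ^ 2
          - 8 * (P1 z) ^ 2 * (P2 z) ^ 2 * P4 z + 5 * (P1 z) ^ 3 * P3 z * P4 z
          - (P1 z) ^ 3 * P2 z * P5 z) * P2 z
        - 4 * (4 * P1 z * (P2 z) ^ 4 - 5 * (P1 z) ^ 2 * (P2 z) ^ 2 * P3 z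
          - (P1 z) ^ 3 * P2 z * P4 z + 3 * (P1 z) ^ 3 * (P3 z) ^ 2) * P3 z) / (P2 z) ^ 5) z := by
  have hnum : HasDerivAt (fun w => 4 * P1 w * (P2 w) ^ 4 - 5 * (P1 w) ^ 2 * (P2 w) ^ 2 * P3 w
      - (P1 w) ^ 3 * P2 w * P4 w + 3 * (P1 w) ^ 3 * (P3 w) ^ 2)
      (4 * P2 z * (P2 z) ^ 4 + 4 * P1 z * (4 * (P2 z) ^ 3 * P3 z)
        - ((5 * (2 * P1 z * P2 z)) * (P2 z) ^ 2 * P3 z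
           + 5 * (P1 z) ^ 2 * (2 * P2 z * P3 z) * P3 z
           + 5 * (P1 z) ^ 2 * (P2 z) ^ 2 * P4 z)
        - ((3 * (P1 z) ^ 2 * P2 z) * P2 z * P4 z + (P1 z) ^ 3 * P3 z * P4 z
           + (P1 z) ^ 3 * P2 z * P5 z)
        + (3 * (3 * (P1 z) ^ 2 * P2 z) * (P3 z) ^ 2
           + 3 * (P1 z) ^ 3 * (2 * P3 z * P4 z))) z := by
    have a1 := ((h1.const_mul 4).mul (h2.pow 4))
    have a2 := (((h1.pow 2).const_mul 5).mul (h2.pow 2)).mul h3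
    have a3 := ((h1.pow 3).mul h2).mul h4
    have a4 := ((h1.pow 3).const_mul 3).mul (h3.pow 2)
    have h := ((a1.sub a2).sub a3).add a4
    refine h.congr_deriv ?_
    simp only [Pi.pow_apply, Pi.mul_apply, Pi.neg_apply, Pi.sub_apply, Pi.add_apply]
    ring
  have h := hnum.div (h2.pow 4) (pow_ne_zero 4 h0)
  refine h.congr_deriv ?_
  simp only [Pi.pow_apply, Pi.mul_apply, Pi.neg_apply, Pi.sub_apply, Pi.add_apply]
  field_simp
  ring

-- c * (P1)^2 / P2 (the HJB right-hand side), ξ-direction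
lemma hd_u {P1 P2 P3 : ℝ → ℝ} {z c : ℝ}
    (h1 : HasDerivAt P1 (P2 z) z) (h2 : HasDerivAt P2 (P3 z) z) (h0 : P2 z ≠ 0) :
    HasDerivAt (fun w => c * (P1 w) ^ 2 / P2 w)
      (c * (2 * P1 z * (P2 z) ^ 2 - (P1 z) ^ 2 * P3 z) / (P2 z) ^ 2) z := by
  have h := ((h1.pow 2).const_mul c).div h2 h0
  refine h.congr_deriv ?_
  simp only [Pi.pow_apply, Pi.mul_apply, Pi.neg_apply, Pi.sub_apply, Pi.add_apply]
  field_simp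
  ring

-- c*(2 P1 P2^2 - P1^2 P3)/P2^2  (u₁ form), ξ-direction
lemma hd_E1 {P1 P2 P3 P4 : ℝ → ℝ} {z c : ℝ}
    (h1 : HasDerivAt P1 (P2 z) z) (h2 : HasDerivAt P2 (P3 z) z)
    (h3 : HasDerivAt P3 (P4 z) z) (h0 : P2 z ≠ 0) :
    HasDerivAt (fun w => c * (2 * P1 w * (P2 w) ^ 2 - (P1 w) ^ 2 * P3 w) / (P2 w) ^ 2)
      (c * (2 * (P2 z) ^ 4 - 2 * P1 z * (P2 z) ^ 2 * P3 z - (P1 z) ^ 2 * P2 z * P4 z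
        + 2 * (P1 z) ^ 2 * (P3 z) ^ 2) / (P2 z) ^ 3) z := by
  have hnum : HasDerivAt (fun w => c * (2 * P1 w * (P2 w) ^ 2 - (P1 w) ^ 2 * P3 w))
      (c * (2 * P2 z * (P2 z) ^ 2 + 2 * P1 z * (2 * P2 z * P3 z)
        - (2 * P1 z * P2 z * P3 z + (P1 z) ^ 2 * P4 z))) z := by
    have h := (((h1.const_mul 2).mul (h2.pow 2)).sub ((h1.pow 2).mul h3)).const_mul c
    refine h.congr_deriv ?_
    simp only [Pi.pow_apply, Pi.mul_apply, Pi.neg_apply, Pi.sub_apply, Pi.add_apply]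
    ring
  have h := hnum.div (h2.pow 2) (pow_ne_zero 2 h0)
  refine h.congr_deriv ?_
  simp only [Pi.pow_apply, Pi.mul_apply, Pi.neg_apply, Pi.sub_apply, Pi.add_apply]
  field_simp
  ring

-- c*W/P2^3 (u₂ form), ξ-direction
lemma hd_E2 {P1 P2 P3 P4 P5 : ℝ → ℝ} {z c : ℝ}
    (h1 : HasDerivAt P1 (P2 z) z) (h2 : HasDerivAt P2 (P3 z) z)
    (h3 : HasDerivAt P3 (P4 z) z) (h4 : HasDerivAt P4 (P5 z) z) (h0 : P2 z ≠ 0) :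
    HasDerivAt (fun w => c * (2 * (P2 w) ^ 4 - 2 * P1 w * (P2 w) ^ 2 * P3 w
        - (P1 w) ^ 2 * P2 w * P4 w + 2 * (P1 w) ^ 2 * (P3 w) ^ 2) / (P2 w) ^ 3)
      (c * ((6 * (P2 z) ^ 3 * P3 z - 4 * P1 z * (P2 z) ^ 2 * P4 z
          + 3 * (P1 z) ^ 2 * P3 z * P4 z - (P1 z) ^ 2 * P2 z * P5 z) * P2 z
        - 3 * (2 * (P2 z) ^ 4 - 2 * P1 z * (P2 z) ^ 2 * P3 z - (P1 z) ^ 2 * P2 z * P4 z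
          + 2 * (P1 z) ^ 2 * (P3 z) ^ 2) * P3 z) / (P2 z) ^ 4) z := by
  have hnum : HasDerivAt (fun w => c * (2 * (P2 w) ^ 4 - 2 * P1 w * (P2 w) ^ 2 * P3 w
      - (P1 w) ^ 2 * P2 w * P4 w + 2 * (P1 w) ^ 2 * (P3 w) ^ 2))
      (c * (6 * (P2 z) ^ 3 * P3 z - 4 * P1 z * (P2 z) ^ 2 * P4 z
        + 3 * (P1 z) ^ 2 * P3 z * P4 z - (P1 z) ^ 2 * P2 z * P5 z)) z := by
    have b1 := (h2.pow 4).const_mul 2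
    have b2 := (((h1.const_mul 2).mul (h2.pow 2)).mul h3)
    have b3 := (((h1.pow 2).mul h2).mul h4)
    have b4 := ((h1.pow 2).const_mul 2).mul (h3.pow 2)
    have h := (((b1.sub b2).sub b3).add b4).const_mul c
    refine h.congr_deriv ?_
    simp only [Pi.pow_apply, Pi.mul_apply, Pi.neg_apply, Pi.sub_apply, Pi.add_apply]
    ring
  have h := hnum.div (h2.pow 3) (pow_ne_zero 3 h0)
  refine h.congr_deriv ?_
  simp only [Pi.pow_apply, Pi.mul_apply, Pi.neg_apply, Pi.sub_apply, Pi.add_apply]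
  field_simp
  ring

noncomputable def qf (Q : ℝ → ℝ → ℝ) : ℕ → (ℝ × ℝ → ℝ)
  | 0 => fun p => Q p.1 p.2
  | n + 1 => pdX (qf Q n)

noncomputable def uf (Q : ℝ → ℝ → ℝ) : ℕ → (ℝ × ℝ → ℝ)
  | 0 => pdT (fun p => Q p.1 p.2)
  | n + 1 => pdX (uf Q n)

variable {Q : ℝ → ℝ → ℝ}

lemma qf_cd (hQ : ContDiff ℝ (⊤ : ℕ∞) (fun p : ℝ × ℝ => Q p.1 p.2)) :
    ∀ n, ContDiff ℝ (⊤ : ℕ∞) (qf Q n)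
  | 0 => hQ
  | n + 1 => pdX_contDiff (qf_cd hQ n)

lemma uf_cd (hQ : ContDiff ℝ (⊤ : ℕ∞) (fun p : ℝ × ℝ => Q p.1 p.2)) :
    ∀ n, ContDiff ℝ (⊤ : ℕ∞) (uf Q n)
  | 0 => pdT_contDiff hQ
  | n + 1 => pdX_contDiff (uf_cd hQ n)

lemma qf_slice (hQ : ContDiff ℝ (⊤ : ℕ∞) (fun p : ℝ × ℝ => Q p.1 p.2)) (n : ℕ) (t z : ℝ) :
    HasDerivAt (fun w => qf Q n (t, w)) (qf Q (n + 1) (t, z)) z :=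
  pd_sliceX (qf_cd hQ n) t z

lemma uf_slice (hQ : ContDiff ℝ (⊤ : ℕ∞) (fun p : ℝ × ℝ => Q p.1 p.2)) (n : ℕ) (t z : ℝ) :
    HasDerivAt (fun w => uf Q n (t, w)) (uf Q (n + 1) (t, z)) z :=
  pd_sliceX (uf_cd hQ n) t z

lemma qf_sliceT (hQ : ContDiff ℝ (⊤ : ℕ∞) (fun p : ℝ × ℝ => Q p.1 p.2)) (n : ℕ) (t z : ℝ) :
    HasDerivAt (fun s => qf Q n (s, z)) (pdT (qf Q n) (t, z)) t :=
  pd_sliceT (qf_cd hQ n) t z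

lemma qf_mixed (hQ : ContDiff ℝ (⊤ : ℕ∞) (fun p : ℝ × ℝ => Q p.1 p.2)) :
    ∀ n, ∀ p : ℝ × ℝ, pdT (qf Q n) p = uf Q n p
  | 0, p => rfl
  | n + 1, p => by
    show pdT (pdX (qf Q n)) p = uf Q (n + 1) p
    rw [pd_comm (qf_cd hQ n) p, show pdT (qf Q n) = uf Q n from funext (qf_mixed hQ n)]
    rfl

lemma dQ1 (hQ : ContDiff ℝ (⊤ : ℕ∞) (fun p : ℝ × ℝ => Q p.1 p.2)) (t z : ℝ) :
    deriv (Q t) z = qf Q 1 (t, z) :=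
  (qf_slice hQ 0 t z).deriv

lemma dQ2 (hQ : ContDiff ℝ (⊤ : ℕ∞) (fun p : ℝ × ℝ => Q p.1 p.2)) (t z : ℝ) :
    deriv (deriv (Q t)) z = qf Q 2 (t, z) := by
  rw [show deriv (Q t) = fun w => qf Q 1 (t, w) from funext fun w => dQ1 hQ t w]
  exact (qf_slice hQ 1 t z).deriv

lemma dQ3 (hQ : ContDiff ℝ (⊤ : ℕ∞) (fun p : ℝ × ℝ => Q p.1 p.2)) (t z : ℝ) :
    deriv (deriv (deriv (Q t))) z = qf Q 3 (t, z) := by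
  rw [show deriv (deriv (Q t)) = fun w => qf Q 2 (t, w) from funext fun w => dQ2 hQ t w]
  exact (qf_slice hQ 2 t z).deriv

lemma dQt (hQ : ContDiff ℝ (⊤ : ℕ∞) (fun p : ℝ × ℝ => Q p.1 p.2)) (t z : ℝ) :
    deriv (fun s => Q s z) t = uf Q 0 (t, z) :=
  (pd_sliceT hQ t z).deriv

set_option maxHeartbeats 2000000 in

/-- the first-order correction
`Q¹(t,ξ,x,y) = (T-t)λ₀A(t,x,y)(D₁Q)(t,ξ) + (1/2)(T-t)²λ₀B((D₃ - 2D₁)Q)(t,ξ)`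
satisfies `(∂_t + A₀ + B₀)Q¹ + λ₀(λ₁₀(x - x̄) + λ₀₁(y - ȳ))(D₁Q)(t,ξ) = 0` on
`(0,T) × (α,1) × ℝ²`, together with the terminal condition `Q¹(T,ξ,x,y) = 0`.
Here `R = -Q_ξ/Q_ξξ`, `D_k = R^k ∂_ξ^k`,
`A₀ = b₀∂_x + c₀∂_y + (σ₀²/2)∂_x² + (β₀²/2)∂_y² + ρσ₀β₀∂_x∂_y`, and
`B₀ = λ₀²D₁ + (λ₀²/2)D₂ + ρβ₀λ₀D₁∂_y + σ₀λ₀D₁∂_x`. -/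
theorem first_order_correction_original_variables
    (α T lam0 b0 c0 sig0 bet0 rho xbar ybar lam10 lam01 : ℝ)
    (hα : α ∈ Ioo (0 : ℝ) 1) (hT : 0 < T)
    (Q : ℝ → ℝ → ℝ)
    (hQ : ContDiff ℝ (⊤ : ℕ∞) (fun p : ℝ × ℝ => Q p.1 p.2))
    (hQξ : ∀ t ∈ Icc (0 : ℝ) T, ∀ ξ ∈ Icc α 1, 0 < deriv (Q t) ξ)
    (hQξξ : ∀ t ∈ Icc (0 : ℝ) T, ∀ ξ ∈ Icc α 1, deriv (deriv (Q t)) ξ < 0)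
    (hHJB : ∀ t ∈ Ico (0 : ℝ) T, ∀ ξ ∈ Ioo α 1,
      deriv (fun s => Q s ξ) t
        - lam0 ^ 2 / 2 * (deriv (Q t) ξ) ^ 2 / deriv (deriv (Q t)) ξ = 0)
    (R : ℝ → ℝ → ℝ)
    (hR : ∀ t ξ, R t ξ = -(deriv (Q t) ξ) / deriv (deriv (Q t)) ξ)
    (A : ℝ → ℝ → ℝ → ℝ)
    (hA : ∀ t x y, A t x y =
      lam10 * ((x - xbar) + 1 / 2 * (T - t) * b0)
        + lam01 * ((y - ybar) + 1 / 2 * (T - t) * c0))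
    (B : ℝ) (hB : B = lam10 * sig0 * lam0 + lam01 * rho * bet0 * lam0)
    (Q1 : ℝ → ℝ → ℝ → ℝ → ℝ)
    (hQ1 : ∀ t ξ x y, Q1 t ξ x y =
      (T - t) * lam0 * A t x y * (R t ξ * deriv (Q t) ξ)
        + 1 / 2 * (T - t) ^ 2 * lam0 * B *
            ((R t ξ) ^ 3 * deriv (deriv (deriv (Q t))) ξ
              - 2 * (R t ξ * deriv (Q t) ξ))) :
    (∀ t ∈ Ioo (0 : ℝ) T, ∀ ξ ∈ Ioo α 1, ∀ x y : ℝ,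
      -- (∂_t + A₀ + B₀) Q¹ at (t,ξ,x,y)
      deriv (fun s => Q1 s ξ x y) t
        + b0 * deriv (fun w => Q1 t ξ w y) x
        + c0 * deriv (fun w => Q1 t ξ x w) y
        + sig0 ^ 2 / 2 * deriv (fun w => deriv (fun v => Q1 t ξ v y) w) x
        + bet0 ^ 2 / 2 * deriv (fun w => deriv (fun v => Q1 t ξ x v) w) y
        + rho * sig0 * bet0 * deriv (fun w => deriv (fun v => Q1 t ξ w v) y) x
        + lam0 ^ 2 * (R t ξ * deriv (fun w => Q1 t w x y) ξ)
        + lam0 ^ 2 / 2 * ((R t ξ) ^ 2 * deriv (fun w => deriv (fun v => Q1 t v x y) w) ξ)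
        + rho * bet0 * lam0 * (R t ξ * deriv (fun w => deriv (fun v => Q1 t w x v) y) ξ)
        + sig0 * lam0 * (R t ξ * deriv (fun w => deriv (fun v => Q1 t w v y) x) ξ)
        + lam0 * (lam10 * (x - xbar) + lam01 * (y - ybar)) * (R t ξ * deriv (Q t) ξ)
      = 0)
    ∧ (∀ ξ ∈ Icc α 1, ∀ x y : ℝ, Q1 T ξ x y = 0) := by

  have hQcd : ContDiff ℝ (⊤ : ℕ∞) (qf Q 0) := hQ
  refine ⟨?_, ?_⟩
  · intro t ht ξ hξ x y
    have htI : t ∈ Icc (0 : ℝ) T := ⟨ht.1.le, ht.2.le⟩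
    have hne : ∀ z ∈ Ioo α 1, qf Q 2 (t, z) ≠ 0 := by
      intro z hz
      have h := hQξξ t htI z (Ioo_subset_Icc_self hz)
      rw [dQ2 hQ t z] at h
      exact ne_of_lt h
    have ha2 : qf Q 2 (t, ξ) ≠ 0 := hne ξ hξ
    -- the HJB equation in pdX/pdT form, at the fixed time t
    have hU : ∀ z ∈ Ioo α 1, uf Q 0 (t, z) = lam0 ^ 2 / 2 * qf Q 1 (t, z) ^ 2 / qf Q 2 (t, z) := by
      intro z hz
      have h := hHJB t ⟨ht.1.le, ht.2⟩ z hz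
      rw [dQt hQ t z, dQ1 hQ t z, dQ2 hQ t z] at h
      linarith
    -- first ξ-derivative of the HJB equation
    have hu1 : ∀ z ∈ Ioo α 1, uf Q 1 (t, z) =
        lam0 ^ 2 / 2 * (2 * qf Q 1 (t, z) * qf Q 2 (t, z) ^ 2 - qf Q 1 (t, z) ^ 2 * qf Q 3 (t, z)) / qf Q 2 (t, z) ^ 2 := by
      intro z hz
      have hs : uf Q 1 (t, z) = deriv (fun w => uf Q 0 (t, w)) z := ((uf_slice hQ 0 t z).deriv).symm
      have hev : (fun w => uf Q 0 (t, w)) =ᶠ[nhds z]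
          (fun w => lam0 ^ 2 / 2 * qf Q 1 (t, w) ^ 2 / qf Q 2 (t, w)) :=
        Filter.eventuallyEq_of_mem (isOpen_Ioo.mem_nhds hz) (fun w hw => hU w hw)
      rw [hs, hev.deriv_eq]
      exact (hd_u (P1 := fun w => qf Q 1 (t, w)) (P2 := fun w => qf Q 2 (t, w)) (P3 := fun w => qf Q 3 (t, w)) (qf_slice hQ 1 t z) (qf_slice hQ 2 t z) (hne z hz)).deriv
    -- second ξ-derivative of the HJB equation
    have hu2 : ∀ z ∈ Ioo α 1, uf Q 2 (t, z) =
        lam0 ^ 2 / 2 * (2 * qf Q 2 (t, z) ^ 4 - 2 * qf Q 1 (t, z) * qf Q 2 (t, z) ^ 2 * qf Q 3 (t, z)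
          - qf Q 1 (t, z) ^ 2 * qf Q 2 (t, z) * qf Q 4 (t, z) + 2 * qf Q 1 (t, z) ^ 2 * qf Q 3 (t, z) ^ 2) / qf Q 2 (t, z) ^ 3 := by
      intro z hz
      have hs : uf Q 2 (t, z) = deriv (fun w => uf Q 1 (t, w)) z := ((uf_slice hQ 1 t z).deriv).symm
      have hev : (fun w => uf Q 1 (t, w)) =ᶠ[nhds z]
          (fun w => lam0 ^ 2 / 2 * (2 * qf Q 1 (t, w) * qf Q 2 (t, w) ^ 2 - qf Q 1 (t, w) ^ 2 * qf Q 3 (t, w)) / qf Q 2 (t, w) ^ 2) :=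
        Filter.eventuallyEq_of_mem (isOpen_Ioo.mem_nhds hz) (fun w hw => hu1 w hw)
      rw [hs, hev.deriv_eq]
      exact (hd_E1 (P1 := fun w => qf Q 1 (t, w)) (P2 := fun w => qf Q 2 (t, w)) (P3 := fun w => qf Q 3 (t, w)) (P4 := fun w => qf Q 4 (t, w)) (qf_slice hQ 1 t z) (qf_slice hQ 2 t z) (qf_slice hQ 3 t z) (hne z hz)).deriv
    -- third ξ-derivative of the HJB equation, at ξ
    have hu3 : uf Q 3 (t, ξ) =
        lam0 ^ 2 / 2 * ((6 * qf Q 2 (t, ξ) ^ 3 * qf Q 3 (t, ξ) - 4 * qf Q 1 (t, ξ) * qf Q 2 (t, ξ) ^ 2 * qf Q 4 (t, ξ)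
            + 3 * qf Q 1 (t, ξ) ^ 2 * qf Q 3 (t, ξ) * qf Q 4 (t, ξ) - qf Q 1 (t, ξ) ^ 2 * qf Q 2 (t, ξ) * qf Q 5 (t, ξ)) * qf Q 2 (t, ξ)
          - 3 * (2 * qf Q 2 (t, ξ) ^ 4 - 2 * qf Q 1 (t, ξ) * qf Q 2 (t, ξ) ^ 2 * qf Q 3 (t, ξ) - qf Q 1 (t, ξ) ^ 2 * qf Q 2 (t, ξ) * qf Q 4 (t, ξ)
            + 2 * qf Q 1 (t, ξ) ^ 2 * qf Q 3 (t, ξ) ^ 2) * qf Q 3 (t, ξ)) / qf Q 2 (t, ξ) ^ 4 := by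
      have hs : uf Q 3 (t, ξ) = deriv (fun w => uf Q 2 (t, w)) ξ := ((uf_slice hQ 2 t ξ).deriv).symm
      have hev : (fun w => uf Q 2 (t, w)) =ᶠ[nhds ξ]
          (fun w => lam0 ^ 2 / 2 * (2 * qf Q 2 (t, w) ^ 4 - 2 * qf Q 1 (t, w) * qf Q 2 (t, w) ^ 2 * qf Q 3 (t, w)
            - qf Q 1 (t, w) ^ 2 * qf Q 2 (t, w) * qf Q 4 (t, w) + 2 * qf Q 1 (t, w) ^ 2 * qf Q 3 (t, w) ^ 2) / qf Q 2 (t, w) ^ 3) :=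
        Filter.eventuallyEq_of_mem (isOpen_Ioo.mem_nhds hξ) (fun w hw => hu2 w hw)
      rw [hs, hev.deriv_eq]
      exact (hd_E2 (P1 := fun w => qf Q 1 (t, w)) (P2 := fun w => qf Q 2 (t, w)) (P3 := fun w => qf Q 3 (t, w)) (P4 := fun w => qf Q 4 (t, w)) (P5 := fun w => qf Q 5 (t, w)) (qf_slice hQ 1 t ξ) (qf_slice hQ 2 t ξ) (qf_slice hQ 3 t ξ)
        (qf_slice hQ 4 t ξ) ha2).deriv
    -- the t-slice of Q1 in closed form
    have hfunT : (fun s => Q1 s ξ x y) = (fun s =>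
        (T - s) * lam0 * ((lam10 * (x - xbar) + lam01 * (y - ybar)) + (T - s) * (1 / 2 * (lam10 * b0 + lam01 * c0))) * (-qf Q 1 (s, ξ) ^ 2 / qf Q 2 (s, ξ))
        + 1 / 2 * (T - s) ^ 2 * lam0 * B *
            ((2 * qf Q 1 (s, ξ) ^ 2 * qf Q 2 (s, ξ) ^ 2 - qf Q 1 (s, ξ) ^ 3 * qf Q 3 (s, ξ)) / qf Q 2 (s, ξ) ^ 3)) := by
      funext s
      rw [hQ1, hA, hR, dQ1 hQ s ξ, dQ2 hQ s ξ, dQ3 hQ s ξ]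
      rcases eq_or_ne (qf Q 2 (s, ξ)) 0 with h | h
      · rw [h]; simp
      · field_simp
        ring
    -- the ξ-slice of Q1 in closed form
    have hfunξ : (fun w => Q1 t w x y) = (fun w =>
        (T - t) * lam0 * A t x y * (-qf Q 1 (t, w) ^ 2 / qf Q 2 (t, w))
        + 1 / 2 * (T - t) ^ 2 * lam0 * B * ((2 * qf Q 1 (t, w) ^ 2 * qf Q 2 (t, w) ^ 2 - qf Q 1 (t, w) ^ 3 * qf Q 3 (t, w)) / qf Q 2 (t, w) ^ 3)) := by
      funext w
      rw [hQ1, hR, dQ1 hQ t w, dQ2 hQ t w, dQ3 hQ t w]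
      rcases eq_or_ne (qf Q 2 (t, w)) 0 with h | h
      · rw [h]; simp
      · field_simp
        ring
    -- affine structure in the x variable
    have hfunX : ∀ z w', (fun v => Q1 t z v w') = (fun v =>
        ((T - t) * lam0 * lam10 * (R t z * deriv (Q t) z)) * v
        + ((T - t) * lam0 * (lam10 * (-xbar + 1 / 2 * (T - t) * b0)
            + lam01 * ((w' - ybar) + 1 / 2 * (T - t) * c0)) * (R t z * deriv (Q t) z)
          + 1 / 2 * (T - t) ^ 2 * lam0 * B * ((R t z) ^ 3 * deriv (deriv (deriv (Q t))) z
            - 2 * (R t z * deriv (Q t) z)))) := by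
      intro z w'
      funext v
      rw [hQ1, hA]
      ring
    -- affine structure in the y variable
    have hfunY : ∀ z w', (fun v => Q1 t z w' v) = (fun v =>
        ((T - t) * lam0 * lam01 * (R t z * deriv (Q t) z)) * v
        + ((T - t) * lam0 * (lam10 * ((w' - xbar) + 1 / 2 * (T - t) * b0)
            + lam01 * (-ybar + 1 / 2 * (T - t) * c0)) * (R t z * deriv (Q t) z)
          + 1 / 2 * (T - t) ^ 2 * lam0 * B * ((R t z) ^ 3 * deriv (deriv (deriv (Q t))) z
            - 2 * (R t z * deriv (Q t) z)))) := by
      intro z w'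
      funext v
      rw [hQ1, hA]
      ring
    -- term 1 : time derivative
    have hTs : HasDerivAt (fun s : ℝ => T - s) (-1 : ℝ) t := (hasDerivAt_id t).const_sub T
    have e1 : deriv (fun s => Q1 s ξ x y) t =
        (-1 * lam0 * ((lam10 * (x - xbar) + lam01 * (y - ybar)) + (T - t) * (1 / 2 * (lam10 * b0 + lam01 * c0))) + (T - t) * lam0 * (-1 * (1 / 2 * (lam10 * b0 + lam01 * c0)))) * (-qf Q 1 (t, ξ) ^ 2 / qf Q 2 (t, ξ))
        + (T - t) * lam0 * ((lam10 * (x - xbar) + lam01 * (y - ybar)) + (T - t) * (1 / 2 * (lam10 * b0 + lam01 * c0))) *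
            ((qf Q 1 (t, ξ) ^ 2 * (pdT (qf Q 2) (t, ξ)) - 2 * qf Q 1 (t, ξ) * (pdT (qf Q 1) (t, ξ)) * qf Q 2 (t, ξ)) / qf Q 2 (t, ξ) ^ 2)
        + (-(T - t) * lam0 * B) * ((2 * qf Q 1 (t, ξ) ^ 2 * qf Q 2 (t, ξ) ^ 2 - qf Q 1 (t, ξ) ^ 3 * qf Q 3 (t, ξ)) / qf Q 2 (t, ξ) ^ 3)
        + 1 / 2 * (T - t) ^ 2 * lam0 * B *
            (((4 * qf Q 1 (t, ξ) * qf Q 2 (t, ξ) ^ 2 * (pdT (qf Q 1) (t, ξ)) + 4 * qf Q 1 (t, ξ) ^ 2 * qf Q 2 (t, ξ) * (pdT (qf Q 2) (t, ξ))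
              - 3 * qf Q 1 (t, ξ) ^ 2 * qf Q 3 (t, ξ) * (pdT (qf Q 1) (t, ξ)) - qf Q 1 (t, ξ) ^ 3 * (pdT (qf Q 3) (t, ξ))) * qf Q 2 (t, ξ)
              - 3 * (2 * qf Q 1 (t, ξ) ^ 2 * qf Q 2 (t, ξ) ^ 2 - qf Q 1 (t, ξ) ^ 3 * qf Q 3 (t, ξ)) * (pdT (qf Q 2) (t, ξ))) / qf Q 2 (t, ξ) ^ 4) := by
      rw [hfunT]
      have hp1 := qf_sliceT hQ 1 t ξ
      have hp2 := qf_sliceT hQ 2 t ξ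
      have hp3 := qf_sliceT hQ 3 t ξ
      have hφ := hd_negsq_div (P1 := fun s => qf Q 1 (s, ξ)) (P2 := fun s => qf Q 2 (s, ξ)) hp1 hp2 ha2
      have hψ := hd_Ggen (P1 := fun s => qf Q 1 (s, ξ)) (P2 := fun s => qf Q 2 (s, ξ)) (P3 := fun s => qf Q 3 (s, ξ)) hp1 hp2 hp3 ha2
      have piece1 := (hTs.mul_const lam0).mul ((hTs.mul_const (1 / 2 * (lam10 * b0 + lam01 * c0))).const_add (lam10 * (x - xbar) + lam01 * (y - ybar)))
      have piece2 := (((hTs.pow 2).const_mul ((1 : ℝ) / 2)).mul_const lam0).mul_const B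
      exact ((piece1.mul hφ).add (piece2.mul hψ)).deriv.trans (by simp only [Pi.pow_apply, Pi.mul_apply, Pi.neg_apply, Pi.sub_apply, Pi.add_apply]; push_cast; ring)
    -- term 2 : x derivative
    have e2 : deriv (fun w => Q1 t ξ w y) x =
        ((T - t) * lam0 * lam10 * (R t ξ * deriv (Q t) ξ)) * 1 := by
      rw [hfunX ξ y]
      exact (((hasDerivAt_id' (x := x)).const_mul _).add_const _).deriv
    -- term 3 : y derivative
    have e3 : deriv (fun w => Q1 t ξ x w) y =
        ((T - t) * lam0 * lam01 * (R t ξ * deriv (Q t) ξ)) * 1 := by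
      rw [hfunY ξ x]
      exact (((hasDerivAt_id' (x := y)).const_mul _).add_const _).deriv
    -- term 4 : second x derivative vanishes
    have e4 : deriv (fun w => deriv (fun v => Q1 t ξ v y) w) x = 0 := by
      rw [show (fun w => deriv (fun v => Q1 t ξ v y) w)
          = fun _ => ((T - t) * lam0 * lam10 * (R t ξ * deriv (Q t) ξ)) * 1 from funext fun w => by
        rw [hfunX ξ y]; exact (((hasDerivAt_id' (x := w)).const_mul _).add_const _).deriv]
      exact deriv_const x _
    -- term 5 : second y derivative vanishes
    have e5 : deriv (fun w => deriv (fun v => Q1 t ξ x v) w) y = 0 := by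
      rw [show (fun w => deriv (fun v => Q1 t ξ x v) w)
          = fun _ => ((T - t) * lam0 * lam01 * (R t ξ * deriv (Q t) ξ)) * 1 from funext fun w => by
        rw [hfunY ξ x]; exact (((hasDerivAt_id' (x := w)).const_mul _).add_const _).deriv]
      exact deriv_const y _
    -- term 6 : mixed x,y derivative vanishes
    have e6 : deriv (fun w => deriv (fun v => Q1 t ξ w v) y) x = 0 := by
      rw [show (fun w => deriv (fun v => Q1 t ξ w v) y)
          = fun _ => ((T - t) * lam0 * lam01 * (R t ξ * deriv (Q t) ξ)) * 1 from funext fun w => by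
        rw [hfunY ξ w]; exact (((hasDerivAt_id' (x := y)).const_mul _).add_const _).deriv]
      exact deriv_const x _
    -- term 7 : first ξ derivative
    have e7 : deriv (fun w => Q1 t w x y) ξ =
        (T - t) * lam0 * A t x y * ((qf Q 1 (t, ξ) ^ 2 * qf Q 3 (t, ξ) - 2 * qf Q 1 (t, ξ) * qf Q 2 (t, ξ) ^ 2) / qf Q 2 (t, ξ) ^ 2)
        + 1 / 2 * (T - t) ^ 2 * lam0 * B * ((4 * qf Q 1 (t, ξ) * qf Q 2 (t, ξ) ^ 4 - 5 * qf Q 1 (t, ξ) ^ 2 * qf Q 2 (t, ξ) ^ 2 * qf Q 3 (t, ξ)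
            - qf Q 1 (t, ξ) ^ 3 * qf Q 2 (t, ξ) * qf Q 4 (t, ξ) + 3 * qf Q 1 (t, ξ) ^ 3 * qf Q 3 (t, ξ) ^ 2) / qf Q 2 (t, ξ) ^ 4) := by
      rw [hfunξ]
      exact ((((hd_fxi (P1 := fun w => qf Q 1 (t, w)) (P2 := fun w => qf Q 2 (t, w)) (P3 := fun w => qf Q 3 (t, w))) (qf_slice hQ 1 t ξ) (qf_slice hQ 2 t ξ) ha2).const_mul ((T - t) * lam0 * A t x y)).add
        (((hd_Gxi (P1 := fun w => qf Q 1 (t, w)) (P2 := fun w => qf Q 2 (t, w)) (P3 := fun w => qf Q 3 (t, w)) (P4 := fun w => qf Q 4 (t, w))) (qf_slice hQ 1 t ξ) (qf_slice hQ 2 t ξ) (qf_slice hQ 3 t ξ) ha2).const_mul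
          (1 / 2 * (T - t) ^ 2 * lam0 * B))).deriv
    -- term 8 : second ξ derivative
    have hinner8 : ∀ w ∈ Ioo α 1, deriv (fun v => Q1 t v x y) w =
        (T - t) * lam0 * A t x y * ((qf Q 1 (t, w) ^ 2 * qf Q 3 (t, w) - 2 * qf Q 1 (t, w) * qf Q 2 (t, w) ^ 2) / qf Q 2 (t, w) ^ 2)
        + 1 / 2 * (T - t) ^ 2 * lam0 * B * ((4 * qf Q 1 (t, w) * qf Q 2 (t, w) ^ 4 - 5 * qf Q 1 (t, w) ^ 2 * qf Q 2 (t, w) ^ 2 * qf Q 3 (t, w)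
            - qf Q 1 (t, w) ^ 3 * qf Q 2 (t, w) * qf Q 4 (t, w) + 3 * qf Q 1 (t, w) ^ 3 * qf Q 3 (t, w) ^ 2) / qf Q 2 (t, w) ^ 4) := by
      intro w hw
      rw [hfunξ]
      exact ((((hd_fxi (P1 := fun w => qf Q 1 (t, w)) (P2 := fun w => qf Q 2 (t, w)) (P3 := fun w => qf Q 3 (t, w))) (qf_slice hQ 1 t w) (qf_slice hQ 2 t w) (hne w hw)).const_mul ((T - t) * lam0 * A t x y)).add
        (((hd_Gxi (P1 := fun w => qf Q 1 (t, w)) (P2 := fun w => qf Q 2 (t, w)) (P3 := fun w => qf Q 3 (t, w)) (P4 := fun w => qf Q 4 (t, w))) (qf_slice hQ 1 t w) (qf_slice hQ 2 t w) (qf_slice hQ 3 t w)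
          (hne w hw)).const_mul (1 / 2 * (T - t) ^ 2 * lam0 * B))).deriv
    have e8 : deriv (fun w => deriv (fun v => Q1 t v x y) w) ξ =
        (T - t) * lam0 * A t x y * ((qf Q 1 (t, ξ) ^ 2 * qf Q 2 (t, ξ) * qf Q 4 (t, ξ) + 2 * qf Q 1 (t, ξ) * qf Q 2 (t, ξ) ^ 2 * qf Q 3 (t, ξ) - 2 * qf Q 2 (t, ξ) ^ 4
            - 2 * qf Q 1 (t, ξ) ^ 2 * qf Q 3 (t, ξ) ^ 2) / qf Q 2 (t, ξ) ^ 3)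
        + 1 / 2 * (T - t) ^ 2 * lam0 * B * (((4 * qf Q 2 (t, ξ) ^ 5 + 6 * qf Q 1 (t, ξ) * qf Q 2 (t, ξ) ^ 3 * qf Q 3 (t, ξ) - qf Q 1 (t, ξ) ^ 2 * qf Q 2 (t, ξ) * qf Q 3 (t, ξ) ^ 2
            - 8 * qf Q 1 (t, ξ) ^ 2 * qf Q 2 (t, ξ) ^ 2 * qf Q 4 (t, ξ) + 5 * qf Q 1 (t, ξ) ^ 3 * qf Q 3 (t, ξ) * qf Q 4 (t, ξ)
            - qf Q 1 (t, ξ) ^ 3 * qf Q 2 (t, ξ) * qf Q 5 (t, ξ)) * qf Q 2 (t, ξ)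
          - 4 * (4 * qf Q 1 (t, ξ) * qf Q 2 (t, ξ) ^ 4 - 5 * qf Q 1 (t, ξ) ^ 2 * qf Q 2 (t, ξ) ^ 2 * qf Q 3 (t, ξ)
            - qf Q 1 (t, ξ) ^ 3 * qf Q 2 (t, ξ) * qf Q 4 (t, ξ) + 3 * qf Q 1 (t, ξ) ^ 3 * qf Q 3 (t, ξ) ^ 2) * qf Q 3 (t, ξ)) / qf Q 2 (t, ξ) ^ 5) := by
      have hev : (fun w => deriv (fun v => Q1 t v x y) w) =ᶠ[nhds ξ] (fun w =>
          (T - t) * lam0 * A t x y * ((qf Q 1 (t, w) ^ 2 * qf Q 3 (t, w) - 2 * qf Q 1 (t, w) * qf Q 2 (t, w) ^ 2) / qf Q 2 (t, w) ^ 2)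
          + 1 / 2 * (T - t) ^ 2 * lam0 * B * ((4 * qf Q 1 (t, w) * qf Q 2 (t, w) ^ 4 - 5 * qf Q 1 (t, w) ^ 2 * qf Q 2 (t, w) ^ 2 * qf Q 3 (t, w)
              - qf Q 1 (t, w) ^ 3 * qf Q 2 (t, w) * qf Q 4 (t, w) + 3 * qf Q 1 (t, w) ^ 3 * qf Q 3 (t, w) ^ 2) / qf Q 2 (t, w) ^ 4)) :=
        Filter.eventuallyEq_of_mem (isOpen_Ioo.mem_nhds hξ) (fun w hw => hinner8 w hw)
      rw [hev.deriv_eq]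
      exact ((((hd_f1 (P1 := fun w => qf Q 1 (t, w)) (P2 := fun w => qf Q 2 (t, w)) (P3 := fun w => qf Q 3 (t, w)) (P4 := fun w => qf Q 4 (t, w))) (qf_slice hQ 1 t ξ) (qf_slice hQ 2 t ξ) (qf_slice hQ 3 t ξ) ha2).const_mul
          ((T - t) * lam0 * A t x y)).add
        (((hd_G1 (P1 := fun w => qf Q 1 (t, w)) (P2 := fun w => qf Q 2 (t, w)) (P3 := fun w => qf Q 3 (t, w)) (P4 := fun w => qf Q 4 (t, w)) (P5 := fun w => qf Q 5 (t, w))) (qf_slice hQ 1 t ξ) (qf_slice hQ 2 t ξ) (qf_slice hQ 3 t ξ)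
          (qf_slice hQ 4 t ξ) ha2).const_mul (1 / 2 * (T - t) ^ 2 * lam0 * B))).deriv
    -- term 9 : mixed ξ,y derivative
    have hinner9 : ∀ w, deriv (fun v => Q1 t w x v) y =
        (T - t) * lam0 * lam01 * (-qf Q 1 (t, w) ^ 2 / qf Q 2 (t, w)) := by
      intro w
      rw [hfunY w x]
      have h : deriv (fun v => ((T - t) * lam0 * lam01 * (R t w * deriv (Q t) w)) * v
          + ((T - t) * lam0 * (lam10 * ((x - xbar) + 1 / 2 * (T - t) * b0)
              + lam01 * (-ybar + 1 / 2 * (T - t) * c0)) * (R t w * deriv (Q t) w)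
            + 1 / 2 * (T - t) ^ 2 * lam0 * B * ((R t w) ^ 3 * deriv (deriv (deriv (Q t))) w
              - 2 * (R t w * deriv (Q t) w)))) y
          = ((T - t) * lam0 * lam01 * (R t w * deriv (Q t) w)) * 1 :=
        (((hasDerivAt_id' (x := y)).const_mul _).add_const _).deriv
      rw [h, hR, dQ1 hQ t w, dQ2 hQ t w]
      ring
    have e9 : deriv (fun w => deriv (fun v => Q1 t w x v) y) ξ =
        (T - t) * lam0 * lam01 * ((qf Q 1 (t, ξ) ^ 2 * qf Q 3 (t, ξ) - 2 * qf Q 1 (t, ξ) * qf Q 2 (t, ξ) ^ 2) / qf Q 2 (t, ξ) ^ 2) := by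
      rw [show (fun w => deriv (fun v => Q1 t w x v) y)
          = fun w => (T - t) * lam0 * lam01 * (-qf Q 1 (t, w) ^ 2 / qf Q 2 (t, w)) from funext hinner9]
      exact (((hd_fxi (P1 := fun w => qf Q 1 (t, w)) (P2 := fun w => qf Q 2 (t, w)) (P3 := fun w => qf Q 3 (t, w))) (qf_slice hQ 1 t ξ) (qf_slice hQ 2 t ξ) ha2).const_mul
        ((T - t) * lam0 * lam01)).deriv
    -- term 10 : mixed ξ,x derivative
    have hinner10 : ∀ w, deriv (fun v => Q1 t w v y) x =
        (T - t) * lam0 * lam10 * (-qf Q 1 (t, w) ^ 2 / qf Q 2 (t, w)) := by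
      intro w
      rw [hfunX w y]
      have h : deriv (fun v => ((T - t) * lam0 * lam10 * (R t w * deriv (Q t) w)) * v
          + ((T - t) * lam0 * (lam10 * (-xbar + 1 / 2 * (T - t) * b0)
              + lam01 * ((y - ybar) + 1 / 2 * (T - t) * c0)) * (R t w * deriv (Q t) w)
            + 1 / 2 * (T - t) ^ 2 * lam0 * B * ((R t w) ^ 3 * deriv (deriv (deriv (Q t))) w
              - 2 * (R t w * deriv (Q t) w)))) x
          = ((T - t) * lam0 * lam10 * (R t w * deriv (Q t) w)) * 1 :=
        (((hasDerivAt_id' (x := x)).const_mul _).add_const _).deriv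
      rw [h, hR, dQ1 hQ t w, dQ2 hQ t w]
      ring
    have e10 : deriv (fun w => deriv (fun v => Q1 t w v y) x) ξ =
        (T - t) * lam0 * lam10 * ((qf Q 1 (t, ξ) ^ 2 * qf Q 3 (t, ξ) - 2 * qf Q 1 (t, ξ) * qf Q 2 (t, ξ) ^ 2) / qf Q 2 (t, ξ) ^ 2) := by
      rw [show (fun w => deriv (fun v => Q1 t w v y) x)
          = fun w => (T - t) * lam0 * lam10 * (-qf Q 1 (t, w) ^ 2 / qf Q 2 (t, w)) from funext hinner10]
      exact (((hd_fxi (P1 := fun w => qf Q 1 (t, w)) (P2 := fun w => qf Q 2 (t, w)) (P3 := fun w => qf Q 3 (t, w))) (qf_slice hQ 1 t ξ) (qf_slice hQ 2 t ξ) ha2).const_mul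
        ((T - t) * lam0 * lam10)).deriv
    rw [e1, e2, e3, e4, e5, e6, e7, e8, e9, e10,
      qf_mixed hQ 1 (t, ξ), qf_mixed hQ 2 (t, ξ), qf_mixed hQ 3 (t, ξ),
      hu1 ξ hξ, hu2 ξ hξ, hu3, hA, hR, hB, dQ1 hQ t ξ, dQ2 hQ t ξ]
    field_simp
    ring
  · intro ξ hξ x y
    rw [hQ1, sub_self]
    ring
end

section
/- Suppose additionally that Q_ξ(t,1) = 0 for all t ∈ [0,T] (so that R(t,1) = 0). Then the first-order correction satisfies the Neumann boundary condition ∂_ξ Q¹(t,1,x,y) = 0 for all t ∈ [0,T] and (x,y) ∈ ℝ². Moreover, if R(t,α) = 0 for all t ∈ [0,T], then Q¹ satisfies the Dirichlet boundary condition Q¹(t,α,x,y) = 0 for all t ∈ [0,T] and (x,y) ∈ ℝ². -/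
open Set

/-- boundary conditions for the first-order correction
`Q¹(t,ξ,x,y) = (T-t)λ₀A(t,x,y)(D₁Q)(t,ξ) + (1/2)(T-t)²λ₀B((D₃ - 2D₁)Q)(t,ξ)`.
If additionally `Q_ξ(t,1) = 0` for all `t ∈ [0,T]` (so that `R(t,1) = 0`), then
`∂_ξ Q¹(t,1,x,y) = 0` (Neumann); moreover if `R(t,α) = 0` for all `t ∈ [0,T]`,
then `Q¹(t,α,x,y) = 0` (Dirichlet). -/
theorem first_order_correction_boundary_conditions
    (α T lam0 b0 c0 sig0 bet0 rho xbar ybar lam10 lam01 : ℝ)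
    (hα : α ∈ Ioo (0 : ℝ) 1) (hT : 0 < T)
    (Q : ℝ → ℝ → ℝ)
    (hQ : ContDiff ℝ (⊤ : ℕ∞) (fun p : ℝ × ℝ => Q p.1 p.2))
    (hQξ : ∀ t ∈ Icc (0 : ℝ) T, ∀ ξ ∈ Ioo α 1, 0 < deriv (Q t) ξ)
    (hQξξ : ∀ t ∈ Icc (0 : ℝ) T, ∀ ξ ∈ Ioo α 1, deriv (deriv (Q t)) ξ < 0)
    (hQξξ1 : ∀ t ∈ Icc (0 : ℝ) T, deriv (deriv (Q t)) 1 < 0)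
    (R : ℝ → ℝ → ℝ)
    (hR : ∀ t ξ, R t ξ = -(deriv (Q t) ξ) / deriv (deriv (Q t)) ξ)
    (A : ℝ → ℝ → ℝ → ℝ)
    (hA : ∀ t x y, A t x y =
      lam10 * ((x - xbar) + 1 / 2 * (T - t) * b0)
        + lam01 * ((y - ybar) + 1 / 2 * (T - t) * c0))
    (B : ℝ) (hB : B = lam10 * sig0 * lam0 + lam01 * rho * bet0 * lam0)
    (Q1 : ℝ → ℝ → ℝ → ℝ → ℝ)
    (hQ1 : ∀ t ξ x y, Q1 t ξ x y =
      (T - t) * lam0 * A t x y * (R t ξ * deriv (Q t) ξ)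
        + 1 / 2 * (T - t) ^ 2 * lam0 * B *
            ((R t ξ) ^ 3 * deriv (deriv (deriv (Q t))) ξ
              - 2 * (R t ξ * deriv (Q t) ξ)))
    (hNeumannQ : ∀ t ∈ Icc (0 : ℝ) T, deriv (Q t) 1 = 0) :
    (∀ t ∈ Icc (0 : ℝ) T, ∀ x y : ℝ, deriv (fun w => Q1 t w x y) 1 = 0)
    ∧ ((∀ t ∈ Icc (0 : ℝ) T, R t α = 0) →
        ∀ t ∈ Icc (0 : ℝ) T, ∀ x y : ℝ, Q1 t α x y = 0) := by
  constructor
  · intro t ht x y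
    set f := deriv (Q t) with hfdef
    set g := deriv (deriv (Q t)) with hgdef
    set h := deriv (deriv (deriv (Q t))) with hhdef
    have hQt : ContDiff ℝ (⊤ : ℕ∞) (Q t) := by
      have := hQ.comp (ContDiff.prodMk (contDiff_const (c := t)) contDiff_id)
      exact this
    have hQt' : ContDiff ℝ (⊤ : ℕ∞) (Q t) := hQt.of_le (by simp)
    have hf : ContDiff ℝ (⊤ : ℕ∞) f := by
      have := hQt'.iterate_deriv 1
      simpa using this
    have hg : ContDiff ℝ (⊤ : ℕ∞) g := by
      have := hQt'.iterate_deriv 2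
      simpa [Function.iterate_succ_apply'] using this
    have hh : ContDiff ℝ (⊤ : ℕ∞) h := by
      have := hQt'.iterate_deriv 3
      simpa [Function.iterate_succ_apply'] using this
    have hg1 : g 1 ≠ 0 := ne_of_lt (hQξξ1 t ht)
    have hf1 : f 1 = 0 := hNeumannQ t ht
    have Hf : HasDerivAt f (g 1) 1 :=
      (hf.differentiable (by norm_num) 1).hasDerivAt
    have Hg : HasDerivAt g (h 1) 1 :=
      (hg.differentiable (by norm_num) 1).hasDerivAt
    have Hh : HasDerivAt h (deriv h 1) 1 :=
      (hh.differentiable (by norm_num) 1).hasDerivAt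
    have Hdiv : HasDerivAt (fun w => -f w / g w)
        ((-(g 1) * g 1 - (-f 1) * h 1) / (g 1) ^ 2) 1 := Hf.neg.div Hg hg1
    have Hu : HasDerivAt (fun w => -f w / g w * f w)
        ((-(g 1) * g 1 - (-f 1) * h 1) / (g 1) ^ 2 * f 1 + (-f 1 / g 1) * g 1) 1 :=
      Hdiv.mul Hf
    have Hp : HasDerivAt (fun w => (-f w / g w) ^ 3)
        (3 * (-f 1 / g 1) ^ 2 * ((-(g 1) * g 1 - (-f 1) * h 1) / (g 1) ^ 2)) 1 := by
      have := Hdiv.pow 3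
      norm_num at this
      convert this using 1
      · rfl
      · rfl
      · funext w; rfl
      · ring
    have Hv : HasDerivAt (fun w => (-f w / g w) ^ 3 * h w)
        (3 * (-f 1 / g 1) ^ 2 * ((-(g 1) * g 1 - (-f 1) * h 1) / (g 1) ^ 2) * h 1
          + (-f 1 / g 1) ^ 3 * deriv h 1) 1 := Hp.mul Hh
    set c1 := (T - t) * lam0 * A t x y
    set c2 := 1 / 2 * (T - t) ^ 2 * lam0 * B
    set u' := (-(g 1) * g 1 - (-f 1) * h 1) / (g 1) ^ 2 * f 1 + (-f 1 / g 1) * g 1 with hu'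
    set v' := 3 * (-f 1 / g 1) ^ 2 * ((-(g 1) * g 1 - (-f 1) * h 1) / (g 1) ^ 2) * h 1
          + (-f 1 / g 1) ^ 3 * deriv h 1 with hv'
    have Htot : HasDerivAt (fun w => Q1 t w x y) (c1 * u' + c2 * (v' - 2 * u')) 1 := by
      have key : (fun w => Q1 t w x y)
          = fun w => c1 * (-f w / g w * f w)
            + c2 * ((-f w / g w) ^ 3 * h w - 2 * (-f w / g w * f w)) := by
        funext w
        rw [hQ1, hR]
      rw [key]
      exact (Hu.const_mul c1).add ((Hv.sub (Hu.const_mul 2)).const_mul c2)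
    rw [Htot.deriv]
    rw [hu', hv']
    simp [hf1]
  · intro hRα t ht x y
    rw [hQ1, hRα t ht]
    ring
end

section
/- For any η ∈ [0,1], the convex combination h := η·f + (1-η)·g also satisfies the drawdown constraint: h(t) ≥ α · max(m, sup_{s∈[0,t]} h(s)) for every t ∈ [0,T]. -/
/-!
The left side of the drawdown constraint is `α` times a convex functional of the path
(the running maximum floored at `m`), while the right side is linear in the path; so the
constraint survives convex combinations.
-/

open Set

theorem csSup_image_mul_add_mul_le {ι : Type*} {s : Set ι} {f g : ι → ℝ} {a b : ℝ}
    (hs : s.Nonempty) (hf : BddAbove (f '' s)) (hg : BddAbove (g '' s))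
    (ha : 0 ≤ a) (hb : 0 ≤ b) :
    sSup ((fun x => a * f x + b * g x) '' s) ≤ a * sSup (f '' s) + b * sSup (g '' s) := by
  refine csSup_le (hs.image _) ?_
  rintro _ ⟨x, hx, rfl⟩
  have hfx : f x ≤ sSup (f '' s) := le_csSup hf (mem_image_of_mem f hx)
  have hgx : g x ≤ sSup (g '' s) := le_csSup hg (mem_image_of_mem g hx)
  dsimp only
  gcongr

theorem max_mul_add_mul_le (m x y : ℝ) {a b : ℝ} (ha : 0 ≤ a) (hb : 0 ≤ b) (hab : a + b = 1) :
    max m (a * x + b * y) ≤ a * max m x + b * max m y := by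
  have hx := le_max_right m x
  have hy := le_max_right m y
  refine max_le ?_ ?_
  · calc m = a * m + b * m := by rw [← add_mul, hab, one_mul]
      _ ≤ a * max m x + b * max m y := by gcongr <;> exact le_max_left _ _
  · gcongr

theorem drawdown_mul_add_mul {ι : Type*} {s : Set ι} {f g : ι → ℝ} {α m a b : ℝ} {x : ι}
    (hα : 0 ≤ α) (ha : 0 ≤ a) (hb : 0 ≤ b) (hab : a + b = 1)
    (hs : s.Nonempty) (hf : BddAbove (f '' s)) (hg : BddAbove (g '' s))
    (hfx : α * max m (sSup (f '' s)) ≤ f x) (hgx : α * max m (sSup (g '' s)) ≤ g x) :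
    α * max m (sSup ((fun y => a * f y + b * g y) '' s)) ≤ a * f x + b * g x :=
  calc α * max m (sSup ((fun y => a * f y + b * g y) '' s))
      ≤ α * max m (a * sSup (f '' s) + b * sSup (g '' s)) := by
        gcongr; exact csSup_image_mul_add_mul_le hs hf hg ha hb
    _ ≤ α * (a * max m (sSup (f '' s)) + b * max m (sSup (g '' s))) := by
        gcongr; exact max_mul_add_mul_le _ _ _ ha hb hab
    _ = a * (α * max m (sSup (f '' s))) + b * (α * max m (sSup (g '' s))) := by ring
    _ ≤ a * f x + b * g x := by gcongr

theorem drawdown_convex_combination_general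
    (α m T : ℝ) (hα : α ∈ Ioo (0 : ℝ) 1)
    (f g : ℝ → ℝ) (hf : ContinuousOn f (Icc 0 T)) (hg : ContinuousOn g (Icc 0 T))
    (hddf : ∀ t ∈ Icc (0 : ℝ) T, α * max m (sSup (f '' Icc 0 t)) ≤ f t)
    (hddg : ∀ t ∈ Icc (0 : ℝ) T, α * max m (sSup (g '' Icc 0 t)) ≤ g t)
    (η : ℝ) (hη : η ∈ Icc (0 : ℝ) 1) :
    ∀ t ∈ Icc (0 : ℝ) T,
      α * max m (sSup ((fun s => η * f s + (1 - η) * g s) '' Icc 0 t))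
        ≤ η * f t + (1 - η) * g t := by
  intro t ht
  have hsub : Icc 0 t ⊆ Icc 0 T := Icc_subset_Icc_right ht.2
  exact drawdown_mul_add_mul hα.1.le hη.1 (sub_nonneg.2 hη.2) (add_sub_cancel η 1)
    (nonempty_Icc.2 ht.1)
    (isCompact_Icc.image_of_continuousOn (hf.mono hsub)).bddAbove
    (isCompact_Icc.image_of_continuousOn (hg.mono hsub)).bddAbove
    (hddf t ht) (hddg t ht)

/-- if continuous `f, g : [0,T] → ℝ` each satisfy the drawdown constraint
`≥ α · max(m, running sup)`, then any convex combination `h = η·f + (1-η)·g` with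
`η ∈ [0,1]` also satisfies the drawdown constraint. -/
theorem drawdown_convex_combination
    (α m T : ℝ) (hα : α ∈ Ioo (0 : ℝ) 1) (hm : 0 < m) (hT : 0 < T)
    (f g : ℝ → ℝ) (hf : ContinuousOn f (Icc 0 T)) (hg : ContinuousOn g (Icc 0 T))
    (hddf : ∀ t ∈ Icc (0 : ℝ) T, α * max m (sSup (f '' Icc 0 t)) ≤ f t)
    (hddg : ∀ t ∈ Icc (0 : ℝ) T, α * max m (sSup (g '' Icc 0 t)) ≤ g t)
    (η : ℝ) (hη : η ∈ Icc (0 : ℝ) 1) :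
    ∀ t ∈ Icc (0 : ℝ) T,
      α * max m (sSup ((fun s => η * f s + (1 - η) * g s) '' Icc 0 t))
        ≤ η * f t + (1 - η) * g t :=
  drawdown_convex_combination_general α m T hα f g hf hg hddf hddg η hη
end
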